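/- arXiv:1910.08481 — 6 statements merged into one kernel-verified Lean document; each statement's English description precedes it below -/
import Mathlib

section
/- Let 0<σ<σ', k∈{0,1,2}, l∈{0,1}, and let f∈C^∞([0,1];ℂ) be (σ',2)-Gevrey. Then there exists a constant C>0, depending only on σ, σ', k, l and f, such that for every u∈C^∞([0,1];ℂ) with ‖u‖_{σ,k,l} < ∞ one has ‖f·u‖_{σ,k,l} ≤ C ‖u‖_{σ,k,l} (in particular ‖f·u‖_{σ,k,l} < ∞). -/
/-!
By Leibniz, `(f u)⁽ⁿ⁾ = ∑ⱼ C(n,j) f⁽ʲ⁾ u⁽ⁿ⁻ʲ⁾`. The Gevrey bound `|f⁽ʲ⁾| ≤ K j!² / σ'ʲ` and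
`j! (n - j + 1)! ≤ (n + 1)!` turn the Gevrey weight of the `j`-th summand into
`(j + 1)^(k + l) (σ / σ')^(2 j)` times the weight of `u⁽ⁿ⁻ʲ⁾`. Cauchy–Schwarz with the geometric
weights `(σ / σ')ʲ` absorbs the sum over `j` at the cost of a factor `(1 - σ / σ')⁻¹`, and what is
left is the Cauchy product of the Gevrey series of `u` with the summable sequence
`K² (j + 1)^(k + l) (σ / σ')ʲ`.
-/

noncomputable section

open Filter Set MeasureTheory
open scoped ENNReal Topology

/-- The `n`-th term of the Gevrey seminorm sum:
`σ^{2n}/(n!^2 (n+1)!^2) · n^{k+l} · ∫_0^1 (x/σ)^k |u^{(n)}(x)|^2 dx`. -/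
def gTerm (σ : ℝ) (k l : ℕ) (u : ℝ → ℂ) (n : ℕ) : ℝ :=
  σ ^ (2 * n) / ((n.factorial : ℝ) ^ 2 * ((n + 1).factorial : ℝ) ^ 2) * (n : ℝ) ^ (k + l) *
    ∫ x in (0:ℝ)..1, (x / σ) ^ k * ‖iteratedDeriv n u x‖ ^ 2

/-- The `n`-th term of the boundary Gevrey seminorm sum:
`σ^{2n+1}/(n!^2 (n+1)!^2) · |u^{(n)}(0)|^2`. -/
def bTerm (σ : ℝ) (u : ℝ → ℂ) (n : ℕ) : ℝ :=
  σ ^ (2 * n + 1) / ((n.factorial : ℝ) ^ 2 * ((n + 1).factorial : ℝ) ^ 2) *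
    ‖iteratedDeriv n u 0‖ ^ 2

/-- Partial Gevrey seminorm `|u|_{σ,k,l}^{N,M}` (real valued, a finite sum). -/
def psemR (σ : ℝ) (k l N M : ℕ) (u : ℝ → ℂ) : ℝ :=
  Real.sqrt (∑ n ∈ Finset.Icc N M, gTerm σ k l u n)

/-- Partial boundary Gevrey seminorm `[u]_σ^{N,M}` (real valued, a finite sum). -/
def bsemPR (σ : ℝ) (N M : ℕ) (u : ℝ → ℂ) : ℝ :=
  Real.sqrt (∑ n ∈ Finset.Icc N M, bTerm σ u n)

/-- Full Gevrey seminorm `|u|_{σ,k,l}^{N}`, valued in `ℝ≥0∞`. -/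
def fsem (σ : ℝ) (k l N : ℕ) (u : ℝ → ℂ) : ℝ≥0∞ :=
  (∑' n : ℕ, if N ≤ n then ENNReal.ofReal (gTerm σ k l u n) else 0) ^ (1/2 : ℝ)

/-- Full boundary Gevrey seminorm `[u]_σ^{N}`, valued in `ℝ≥0∞`. -/
def bsem (σ : ℝ) (N : ℕ) (u : ℝ → ℂ) : ℝ≥0∞ :=
  (∑' n : ℕ, if N ≤ n then ENNReal.ofReal (bTerm σ u n) else 0) ^ (1/2 : ℝ)

/-- Real value of the full Gevrey seminorm (`= toReal` of `fsem`). -/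
def fsemR (σ : ℝ) (k l N : ℕ) (u : ℝ → ℂ) : ℝ := (fsem σ k l N u).toReal

/-- Real value of the full boundary Gevrey seminorm. -/
def bsemR (σ : ℝ) (N : ℕ) (u : ℝ → ℂ) : ℝ := (bsem σ N u).toReal

/-- The norm `‖u‖_{σ,k,l}`: for `(k,l) = (0,0)` it is `|u|_{σ,0,0}^0`, otherwise
`|u|_{σ,k,l}^0 + (∫_0^1 (x/σ)^k |u|^2)^{1/2}`. -/
def gnorm (σ : ℝ) (k l : ℕ) (u : ℝ → ℂ) : ℝ≥0∞ :=
  if k = 0 ∧ l = 0 then fsem σ 0 0 0 u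
  else fsem σ k l 0 u +
    ENNReal.ofReal (Real.sqrt (∫ x in (0:ℝ)..1, (x / σ) ^ k * ‖u x‖ ^ 2))

/-- The `X^σ` norm: `‖u'‖_{σ,0,0} + |u'|_{σ,1,0}^0 + |u'|_{σ,2,0}^0 + [u']_σ^0`. -/
def Xnorm (σ : ℝ) (u : ℝ → ℂ) : ℝ≥0∞ :=
  fsem σ 0 0 0 (deriv u) + fsem σ 1 0 0 (deriv u) + fsem σ 2 0 0 (deriv u) +
    bsem σ 0 (deriv u)

/-- The `Y^σ` norm: `‖u‖_{σ,0,0} + |u|_{σ,1,0}^0 + [u]_σ^0`. -/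
def Ynorm (σ : ℝ) (u : ℝ → ℂ) : ℝ≥0∞ :=
  fsem σ 0 0 0 u + fsem σ 1 0 0 u + bsem σ 0 u

/-- Membership in `X^σ`: smooth, Dirichlet condition at `1`, finite `X^σ` norm. -/
def MemX (σ : ℝ) (u : ℝ → ℂ) : Prop :=
  ContDiff ℝ (⊤ : ℕ∞) u ∧ u 1 = 0 ∧ Xnorm σ u ≠ ⊤

/-- Membership in `Y^σ`: smooth with finite `Y^σ` norm. -/
def MemY (σ : ℝ) (u : ℝ → ℂ) : Prop :=
  ContDiff ℝ (⊤ : ℕ∞) u ∧ Ynorm σ u ≠ ⊤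

/-- `f` is `(σ', 2)`-Gevrey regular on `[0,1]`. -/
def IsGevrey2 (σ' : ℝ) {E : Type*} [NormedAddCommGroup E] [NormedSpace ℝ E]
    (f : ℝ → E) : Prop :=
  ∃ K : ℝ, 0 < K ∧ ∀ n : ℕ, ∀ x ∈ Set.Icc (0:ℝ) 1,
    ‖iteratedDeriv n f x‖ ≤ K * (n.factorial : ℝ) ^ 2 / σ' ^ n

/-- `u, f` satisfy the shifted ODE
`((κx+x²)u')' + s u' − N(N+1)u + λ Σ_{i<N} ((x−1)^i/i!) u^{(i+1)}(1) = f` on `[0,1]`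
with `u(1) = 0`. -/
def ShiftedODE (κ : ℝ) (s : ℂ) (N : ℕ) (lam : ℝ) (u f : ℝ → ℂ) : Prop :=
  (∀ x ∈ Set.Icc (0:ℝ) 1,
      deriv (fun y : ℝ => ((κ * y + y ^ 2 : ℝ) : ℂ) * deriv u y) x + s * deriv u x
        - (N : ℂ) * ((N : ℂ) + 1) * u x
        + (lam : ℂ) * ∑ i ∈ Finset.range N,
            ((x : ℂ) - 1) ^ i / (i.factorial : ℂ) * iteratedDeriv (i + 1) u 1
        = f x)
    ∧ u 1 = 0

/-- The operator `L_s u = (x² u')' + s u' − W u`. -/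
def Lop (W : ℝ → ℝ) (s : ℂ) (u : ℝ → ℂ) : ℝ → ℂ := fun x =>
  deriv (fun y : ℝ => ((y ^ 2 : ℝ) : ℂ) * deriv u y) x + s * deriv u x - (W x : ℂ) * u x

/-- `Ω¹_σ`. -/
def Omega1 (σ : ℝ) : Set ℂ :=
  {s | s.re ≤ 0 ∧ σ < |s.im|} ∪ {s | 0 < s.re ∧ σ < ‖s‖}

/-- `Ω²_σ`. -/
def Omega2 (σ : ℝ) : Set ℂ :=
  {s | σ < ‖s‖ + s.re ∧ -s.re * ‖s‖ / (2 * (‖s‖ + s.re)) < σ}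

/-- `Ω³_σ`. -/
def Omega3 (σ : ℝ) : Set ℂ :=
  {s | s ≠ 0 ∧
    0 < σ * (‖s‖ - σ + s.re) - (σ * (1 + s.re / ‖s‖) + s.re / 2) ^ 2}

/-- `Ω_σ = Ω¹_σ ∩ (Ω²_σ ∪ Ω³_σ)`. -/
def Omega (σ : ℝ) : Set ℂ := Omega1 σ ∩ (Omega2 σ ∪ Omega3 σ)

/-- The constant `C_{s,σ}`: `|Im s| − σ` when `Re s ≤ 0`, and `|s| − σ` when `Re s > 0`. -/
def Csig (s : ℂ) (σ : ℝ) : ℝ := if s.re ≤ 0 then |s.im| - σ else ‖s‖ - σ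


open Finset
open scoped Nat

theorem ENNReal.tsum_mul_tsum_eq_tsum_sum_range (a b : ℕ → ℝ≥0∞) :
    (∑' i, a i) * ∑' j, b j = ∑' n, ∑ i ∈ range (n + 1), a i * b (n - i) := by
  rw [← ENNReal.tsum_mul_right]
  simp_rw [← ENNReal.tsum_mul_left]
  rw [← ENNReal.tsum_prod (f := fun i j => a i * b j),
    ← (Finset.HasAntidiagonal.sigmaAntidiagonalEquivProd (A := ℕ)).tsum_eq
      (fun p : ℕ × ℕ => a p.1 * b p.2), ENNReal.tsum_sigma']
  refine tsum_congr fun n => ?_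
  rw [← Nat.sum_antidiagonal_eq_sum_range_succ fun i j => a i * b j, ← Finset.sum_finset_coe,
    ← tsum_fintype (L := .unconditional _)]
  rfl

theorem norm_iteratedDeriv_mul_le {𝕜 A : Type*} [NontriviallyNormedField 𝕜] [NormedRing A]
    [NormedAlgebra 𝕜 A] {f g : 𝕜 → A} {N : WithTop ℕ∞} (hf : ContDiff 𝕜 N f)
    (hg : ContDiff 𝕜 N g) (x : 𝕜) {n : ℕ} (hn : n ≤ N) :
    ‖iteratedDeriv n (fun y => f y * g y) x‖ ≤ ∑ i ∈ range (n + 1),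
      (n.choose i : ℝ) * ‖iteratedDeriv i f x‖ * ‖iteratedDeriv (n - i) g x‖ := by
  simpa only [norm_iteratedFDeriv_eq_norm_iteratedDeriv] using
    norm_iteratedFDeriv_mul_le hf hg x hn

theorem sq_sum_le_inv_one_sub_mul_sum_div_pow {θ : ℝ} (hθ : 0 < θ) (hθ1 : θ < 1) (a : ℕ → ℝ)
    (N : ℕ) : (∑ j ∈ range N, a j) ^ 2 ≤ (1 - θ)⁻¹ * ∑ j ∈ range N, a j ^ 2 / θ ^ j := by
  rcases N.eq_zero_or_pos with rfl | hN
  · simp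
  have hgeom : ∑ j ∈ range N, θ ^ j ≤ (1 - θ)⁻¹ :=
    ((summable_geometric_of_lt_one hθ.le hθ1).sum_le_tsum _ fun j _ => by positivity).trans_eq
      (tsum_geometric_of_lt_one hθ.le hθ1)
  have hpos : 0 < ∑ j ∈ range N, θ ^ j :=
    sum_pos (fun j _ => by positivity) (nonempty_range_iff.mpr hN.ne')
  calc (∑ j ∈ range N, a j) ^ 2
      = (∑ j ∈ range N, θ ^ j) * ((∑ j ∈ range N, a j) ^ 2 / ∑ j ∈ range N, θ ^ j) := by
        field_simp
    _ ≤ (1 - θ)⁻¹ * ∑ j ∈ range N, a j ^ 2 / θ ^ j := by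
      gcongr
      exact sq_sum_div_le_sum_sq_div _ _ fun j _ => by positivity

theorem norm_iteratedDeriv_mul_sq_le {ρ : ℝ} (hρ0 : 0 < ρ) (hρ1 : ρ < 1) {f u : ℝ → ℂ}
    (hf : ContDiff ℝ (⊤ : ℕ∞) f) (hu : ContDiff ℝ (⊤ : ℕ∞) u) (B : ℕ → ℝ) {x : ℝ}
    (hB : ∀ j, ‖iteratedDeriv j f x‖ ≤ B j) (n : ℕ) :
    ‖iteratedDeriv n (fun y => f y * u y) x‖ ^ 2 ≤ ∑ j ∈ range (n + 1),
      (1 - ρ)⁻¹ * ((n.choose j * B j) ^ 2 / ρ ^ j) * ‖iteratedDeriv (n - j) u x‖ ^ 2 := by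
  have hleib : ‖iteratedDeriv n (fun y => f y * u y) x‖ ≤
      ∑ j ∈ range (n + 1), n.choose j * B j * ‖iteratedDeriv (n - j) u x‖ :=
    (norm_iteratedDeriv_mul_le hf hu x (by exact_mod_cast le_top)).trans <|
      sum_le_sum fun j _ => by gcongr; exact hB j
  calc ‖iteratedDeriv n (fun y => f y * u y) x‖ ^ 2
      ≤ (∑ j ∈ range (n + 1), n.choose j * B j * ‖iteratedDeriv (n - j) u x‖) ^ 2 :=
        pow_le_pow_left₀ (norm_nonneg _) hleib 2
    _ ≤ (1 - ρ)⁻¹ * ∑ j ∈ range (n + 1),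
          (n.choose j * B j * ‖iteratedDeriv (n - j) u x‖) ^ 2 / ρ ^ j :=
        sq_sum_le_inv_one_sub_mul_sum_div_pow hρ0 hρ1 _ _
    _ = _ := by
        rw [mul_sum]
        exact sum_congr rfl fun j _ => by ring

theorem summable_add_one_pow_mul_geometric (p : ℕ) {ρ : ℝ} (hρ : ‖ρ‖ < 1) :
    Summable fun j : ℕ => ((j : ℝ) + 1) ^ p * ρ ^ j := by
  have h : Summable fun j : ℕ => ∑ i ∈ range (p + 1), (p.choose i : ℝ) * ((j : ℝ) ^ i * ρ ^ j) :=
    summable_sum fun i _ => (summable_pow_mul_geometric_of_norm_lt_one i hρ).mul_left _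
  refine h.congr fun j => ?_
  rw [add_pow, sum_mul]
  refine sum_congr rfl fun i _ => ?_
  ring

theorem Nat.max_add_one_le_mul_max (m j : ℕ) : max (m + j) 1 ≤ (j + 1) * max m 1 := by
  rcases m.eq_zero_or_pos with rfl | hm
  · simp
  · rw [max_eq_left (by omega : 1 ≤ m + j), max_eq_left (by omega : 1 ≤ m)]
    nlinarith

theorem Nat.factorial_mul_factorial_succ_le (m j : ℕ) : j ! * (m + 1)! ≤ (m + j + 1)! := by
  have h := Nat.factorial_mul_factorial_dvd_factorial_add j (m + 1)
  rw [show j + (m + 1) = m + j + 1 by omega] at h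
  exact Nat.le_of_dvd (Nat.factorial_pos _) h

def weightedSqIntegral (σ : ℝ) (k : ℕ) (v : ℝ → ℂ) : ℝ :=
  ∫ x in (0:ℝ)..1, (x / σ) ^ k * ‖v x‖ ^ 2

def gevreyWeight (σ : ℝ) (p n : ℕ) : ℝ :=
  σ ^ (2 * n) / ((n ! : ℝ) ^ 2 * ((n + 1)! : ℝ) ^ 2) * ((max n 1 : ℕ) : ℝ) ^ p

/-- The weight `0 ^ (k + l)` that `gTerm` gives to `n = 0` is replaced by `1` (the `max n 1` in
`gevreyWeight`), so that this single series controls both parts of `gnorm`: it lies between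
`gnorm σ k l u ^ 2 / 4` and `gnorm σ k l u ^ 2`. -/
def gevreyEnergy (σ : ℝ) (k l : ℕ) (u : ℝ → ℂ) : ℝ≥0∞ :=
  ∑' n, ENNReal.ofReal (gevreyWeight σ (k + l) n * weightedSqIntegral σ k (iteratedDeriv n u))

section

variable {σ : ℝ} {k l : ℕ}

theorem weightedSqIntegral_nonneg (hσ : 0 ≤ σ) (v : ℝ → ℂ) : 0 ≤ weightedSqIntegral σ k v :=
  intervalIntegral.integral_nonneg zero_le_one fun x hx => by
    have : 0 ≤ x / σ := div_nonneg hx.1 hσ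
    positivity

theorem weightedSqIntegral_le_sum {ι : Type*} (s : Finset ι) (c : ι → ℝ) {v : ℝ → ℂ}
    {w : ι → ℝ → ℂ} (hσ : 0 ≤ σ) (hv : Continuous v) (hw : ∀ i, Continuous (w i))
    (h : ∀ x ∈ Icc (0 : ℝ) 1, ‖v x‖ ^ 2 ≤ ∑ i ∈ s, c i * ‖w i x‖ ^ 2) :
    weightedSqIntegral σ k v ≤ ∑ i ∈ s, c i * weightedSqIntegral σ k (w i) := by
  have hint : ∀ i ∈ s,
      IntervalIntegrable (fun x => c i * ((x / σ) ^ k * ‖w i x‖ ^ 2)) volume 0 1 :=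
    fun i _ => Continuous.intervalIntegrable (by fun_prop) 0 1
  simp only [weightedSqIntegral, ← intervalIntegral.integral_const_mul]
  rw [← intervalIntegral.integral_finsetSum hint]
  refine intervalIntegral.integral_mono_on zero_le_one
    (Continuous.intervalIntegrable (by fun_prop) 0 1)
    (Continuous.intervalIntegrable (by fun_prop) 0 1) fun x hx => ?_
  have hx0 : 0 ≤ x / σ := div_nonneg hx.1 hσ
  calc (x / σ) ^ k * ‖v x‖ ^ 2 ≤ (x / σ) ^ k * ∑ i ∈ s, c i * ‖w i x‖ ^ 2 := by
        gcongr
        exact h x hx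
    _ = ∑ i ∈ s, c i * ((x / σ) ^ k * ‖w i x‖ ^ 2) := by
      rw [mul_sum]
      exact sum_congr rfl fun i _ => by ring

theorem gevreyWeight_nonneg (hσ : 0 ≤ σ) (p n : ℕ) : 0 ≤ gevreyWeight σ p n := by
  unfold gevreyWeight; positivity

theorem gTerm_succ (u : ℝ → ℂ) (n : ℕ) :
    gTerm σ k l u (n + 1) =
      gevreyWeight σ (k + l) (n + 1) * weightedSqIntegral σ k (iteratedDeriv (n + 1) u) := by
  simp [gTerm, gevreyWeight, weightedSqIntegral]

theorem gevreyEnergy_eq (u : ℝ → ℂ) :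
    gevreyEnergy σ k l u =
      ENNReal.ofReal (weightedSqIntegral σ k u) + ∑' n, ENNReal.ofReal (gTerm σ k l u (n + 1)) := by
  rw [gevreyEnergy, tsum_eq_zero_add' ENNReal.summable]
  simp [gevreyWeight, weightedSqIntegral, gTerm_succ]

theorem fsem_zero_eq (u : ℝ → ℂ) :
    fsem σ k l 0 u = (ENNReal.ofReal (0 ^ (k + l) * weightedSqIntegral σ k u) +
      ∑' n, ENNReal.ofReal (gTerm σ k l u (n + 1))) ^ (1 / 2 : ℝ) := by
  rw [fsem, tsum_eq_zero_add' ENNReal.summable]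
  simp [gTerm, weightedSqIntegral]

theorem gnorm_eq_of_ne (hσ : 0 ≤ σ) (hkl : ¬(k = 0 ∧ l = 0)) (u : ℝ → ℂ) :
    gnorm σ k l u = (∑' n, ENNReal.ofReal (gTerm σ k l u (n + 1))) ^ (1 / 2 : ℝ) +
      ENNReal.ofReal (weightedSqIntegral σ k u) ^ (1 / 2 : ℝ) := by
  have hp : k + l ≠ 0 := by omega
  rw [gnorm, if_neg hkl, fsem_zero_eq, zero_pow hp, zero_mul, ENNReal.ofReal_zero, zero_add,
    ENNReal.ofReal_rpow_of_nonneg (weightedSqIntegral_nonneg hσ u) (by norm_num),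
    ← Real.sqrt_eq_rpow]
  rfl

theorem gevreyEnergy_rpow_le_gnorm (hσ : 0 ≤ σ) (u : ℝ → ℂ) :
    gevreyEnergy σ k l u ^ (1 / 2 : ℝ) ≤ gnorm σ k l u := by
  by_cases hkl : k = 0 ∧ l = 0
  · obtain ⟨rfl, rfl⟩ := hkl
    simp [gnorm, fsem_zero_eq, gevreyEnergy_eq]
  · rw [gnorm_eq_of_ne hσ hkl, gevreyEnergy_eq, add_comm]
    exact ENNReal.rpow_add_le_add_rpow _ _ (by norm_num) (by norm_num)

theorem gnorm_le_two_mul_gevreyEnergy_rpow (hσ : 0 ≤ σ) (u : ℝ → ℂ) :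
    gnorm σ k l u ≤ 2 * gevreyEnergy σ k l u ^ (1 / 2 : ℝ) := by
  by_cases hkl : k = 0 ∧ l = 0
  · obtain ⟨rfl, rfl⟩ := hkl
    have : gnorm σ 0 0 u = gevreyEnergy σ 0 0 u ^ (1 / 2 : ℝ) := by
      simp [gnorm, fsem_zero_eq, gevreyEnergy_eq]
    rw [this, two_mul]
    exact le_self_add
  · rw [gnorm_eq_of_ne hσ hkl, gevreyEnergy_eq, two_mul]
    gcongr
    exacts [le_add_self, le_self_add]

end

theorem gevreyWeight_mul_choose_sq_le {σ σ' : ℝ} (hσ : 0 < σ) (hσ' : 0 < σ') (p : ℕ) {n j : ℕ}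
    (hj : j ≤ n) :
    gevreyWeight σ p n * (n.choose j * ((j ! : ℝ) ^ 2 / σ' ^ j)) ^ 2 ≤
      ((j : ℝ) + 1) ^ p * (σ / σ') ^ (2 * j) * gevreyWeight σ p (n - j) := by
  obtain ⟨m, rfl⟩ : ∃ m, n = m + j := ⟨n - j, by omega⟩
  have hc : ((m + j).choose j : ℝ) * m ! * j ! = (m + j)! := by
    exact_mod_cast Nat.add_choose_mul_factorial_mul_factorial m j
  have hcomb : ((j ! : ℝ) * (m + 1)!) ^ 2 * ((max (m + j) 1 : ℕ) : ℝ) ^ p ≤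
      ((m + j + 1)! : ℝ) ^ 2 * (((j : ℝ) + 1) * ((max m 1 : ℕ) : ℝ)) ^ p := by
    gcongr
    · exact_mod_cast Nat.factorial_mul_factorial_succ_le m j
    · exact_mod_cast Nat.max_add_one_le_mul_max m j
  have hchoose : ((m + j).choose j : ℝ) ≠ 0 := by exact_mod_cast (Nat.choose_pos hj).ne'
  calc gevreyWeight σ p (m + j) * ((m + j).choose j * ((j ! : ℝ) ^ 2 / σ' ^ j)) ^ 2
      = (σ / σ') ^ (2 * j) * (σ ^ (2 * m) / (m ! : ℝ) ^ 2) *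
          ((j ! : ℝ) ^ 2 * ((max (m + j) 1 : ℕ) : ℝ) ^ p / ((m + j + 1)! : ℝ) ^ 2) := by
        rw [gevreyWeight, ← hc, div_pow]
        field_simp
        ring
    _ ≤ (σ / σ') ^ (2 * j) * (σ ^ (2 * m) / (m ! : ℝ) ^ 2) *
          ((((j : ℝ) + 1) * ((max m 1 : ℕ) : ℝ)) ^ p / ((m + 1)! : ℝ) ^ 2) := by
        refine mul_le_mul_of_nonneg_left ?_ (by positivity)
        rw [div_le_div_iff₀ (by positivity) (by positivity)]
        linarith
    _ = ((j : ℝ) + 1) ^ p * (σ / σ') ^ (2 * j) * gevreyWeight σ p (m + j - j) := by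
        rw [Nat.add_sub_cancel, gevreyWeight, mul_pow, div_pow]
        field_simp

theorem gevreyWeight_mul_weightedSqIntegral_mul_le {σ σ' K : ℝ} {f : ℝ → ℂ} (hσ : 0 < σ)
    (hσσ' : σ < σ') (hf : ContDiff ℝ (⊤ : ℕ∞) f)
    (hfK : ∀ j : ℕ, ∀ x ∈ Icc (0 : ℝ) 1, ‖iteratedDeriv j f x‖ ≤ K * (j ! : ℝ) ^ 2 / σ' ^ j)
    {u : ℝ → ℂ} (hu : ContDiff ℝ (⊤ : ℕ∞) u) (k p n : ℕ) :
    gevreyWeight σ p n * weightedSqIntegral σ k (iteratedDeriv n fun y => f y * u y) ≤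
      K ^ 2 / (1 - σ / σ') * ∑ j ∈ range (n + 1), ((j : ℝ) + 1) ^ p * (σ / σ') ^ j *
        (gevreyWeight σ p (n - j) * weightedSqIntegral σ k (iteratedDeriv (n - j) u)) := by
  have hσ' : 0 < σ' := hσ.trans hσσ'
  set ρ := σ / σ'
  have hρ0 : 0 < ρ := div_pos hσ hσ'
  have hρ1 : ρ < 1 := (div_lt_one hσ').mpr hσσ'
  have hcont : ∀ m, Continuous (iteratedDeriv m u) := fun m =>
    hu.continuous_iteratedDeriv m (by exact_mod_cast le_top)
  have hfu := weightedSqIntegral_le_sum (k := k) (range (n + 1))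
    (fun j => (1 - ρ)⁻¹ * ((n.choose j * (K * (j ! : ℝ) ^ 2 / σ' ^ j)) ^ 2 / ρ ^ j)) hσ.le
    ((hf.mul hu).continuous_iteratedDeriv n (by exact_mod_cast le_top)) (fun j => hcont (n - j))
    fun x hx => norm_iteratedDeriv_mul_sq_le hρ0 hρ1 hf hu _ (fun j => hfK j x hx) n
  calc gevreyWeight σ p n * weightedSqIntegral σ k (iteratedDeriv n fun y => f y * u y)
      ≤ gevreyWeight σ p n * ∑ j ∈ range (n + 1),
          (1 - ρ)⁻¹ * ((n.choose j * (K * (j ! : ℝ) ^ 2 / σ' ^ j)) ^ 2 / ρ ^ j) *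
            weightedSqIntegral σ k (iteratedDeriv (n - j) u) := by
        gcongr
        exact gevreyWeight_nonneg hσ.le p n
    _ = K ^ 2 / (1 - ρ) * ∑ j ∈ range (n + 1),
          gevreyWeight σ p n * (n.choose j * ((j ! : ℝ) ^ 2 / σ' ^ j)) ^ 2 / ρ ^ j *
            weightedSqIntegral σ k (iteratedDeriv (n - j) u) := by
        rw [mul_sum, mul_sum]
        exact sum_congr rfl fun j _ => by ring
    _ ≤ K ^ 2 / (1 - ρ) * ∑ j ∈ range (n + 1),
          ((j : ℝ) + 1) ^ p * ρ ^ (2 * j) * gevreyWeight σ p (n - j) / ρ ^ j *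
            weightedSqIntegral σ k (iteratedDeriv (n - j) u) := by
        have hρ1' : 0 ≤ 1 - ρ := by linarith
        gcongr K ^ 2 / (1 - ρ) * ∑ j ∈ _, ?_ / _ * _ with j hj
        · exact weightedSqIntegral_nonneg hσ.le _
        · exact gevreyWeight_mul_choose_sq_le hσ hσ' p (mem_range_succ_iff.mp hj)
    _ = _ := by
        refine congrArg _ (sum_congr rfl fun j _ => ?_)
        rw [pow_mul', sq]
        field_simp

theorem exists_gevreyEnergy_mul_le {σ σ' K : ℝ} {f : ℝ → ℂ} (hσ : 0 < σ) (hσσ' : σ < σ')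
    (hK : 0 < K) (hf : ContDiff ℝ (⊤ : ℕ∞) f)
    (hfK : ∀ j : ℕ, ∀ x ∈ Icc (0 : ℝ) 1, ‖iteratedDeriv j f x‖ ≤ K * (j ! : ℝ) ^ 2 / σ' ^ j)
    (k l : ℕ) :
    ∃ Φ : ℝ, 0 < Φ ∧ ∀ u : ℝ → ℂ, ContDiff ℝ (⊤ : ℕ∞) u →
      gevreyEnergy σ k l (fun x => f x * u x) ≤ ENNReal.ofReal Φ * gevreyEnergy σ k l u := by
  have hσ' : 0 < σ' := hσ.trans hσσ'
  set ρ := σ / σ'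
  have hρ0 : 0 < ρ := div_pos hσ hσ'
  have hρ1 : ρ < 1 := (div_lt_one hσ').mpr hσσ'
  set a : ℕ → ℝ := fun j => ((j : ℝ) + 1) ^ (k + l) * ρ ^ j
  have ha : ∀ j, 0 ≤ a j := fun j => by positivity
  have hsum : Summable a :=
    summable_add_one_pow_mul_geometric (k + l) (by rwa [Real.norm_of_nonneg hρ0.le])
  have hc : 0 < K ^ 2 / (1 - ρ) := div_pos (by positivity) (by linarith)
  refine ⟨K ^ 2 / (1 - ρ) * ∑' j, a j, mul_pos hc (hsum.tsum_pos ha 0 (by simp [a])),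
    fun u hu => ?_⟩
  set b : ℕ → ℝ := fun m =>
    gevreyWeight σ (k + l) m * weightedSqIntegral σ k (iteratedDeriv m u)
  have hb : ∀ m, 0 ≤ b m := fun m =>
    mul_nonneg (gevreyWeight_nonneg hσ.le _ _) (weightedSqIntegral_nonneg hσ.le _)
  calc gevreyEnergy σ k l (fun x => f x * u x)
      ≤ ∑' n, ENNReal.ofReal (K ^ 2 / (1 - ρ)) *
          ∑ j ∈ range (n + 1), ENNReal.ofReal (a j) * ENNReal.ofReal (b (n - j)) := by
        refine ENNReal.tsum_le_tsum fun n => ?_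
        have hab : ∀ j ∈ range (n + 1), 0 ≤ a j * b (n - j) := fun j _ =>
          mul_nonneg (ha j) (hb _)
        simp_rw [← ENNReal.ofReal_mul (ha _)]
        rw [← ENNReal.ofReal_sum_of_nonneg hab, ← ENNReal.ofReal_mul hc.le]
        exact ENNReal.ofReal_le_ofReal
          (gevreyWeight_mul_weightedSqIntegral_mul_le hσ hσσ' hf hfK hu k (k + l) n)
    _ = ENNReal.ofReal (K ^ 2 / (1 - ρ) * ∑' j, a j) * gevreyEnergy σ k l u := by
        rw [ENNReal.tsum_mul_left, ← ENNReal.tsum_mul_tsum_eq_tsum_sum_range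
          (fun j => ENNReal.ofReal (a j)) fun m => ENNReal.ofReal (b m),
          ← ENNReal.ofReal_tsum_of_nonneg ha hsum, ← mul_assoc, ← ENNReal.ofReal_mul hc.le]
        rfl

theorem statement1_general (σ σ' : ℝ) (hσ : 0 < σ) (hσσ' : σ < σ') (k l : ℕ)
    (f : ℝ → ℂ) (hf : ContDiff ℝ (⊤ : ℕ∞) f) (hfG : IsGevrey2 σ' f) :
    ∃ C : ℝ, 0 < C ∧ ∀ u : ℝ → ℂ, ContDiff ℝ (⊤ : ℕ∞) u → gnorm σ k l u ≠ ⊤ →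
      gnorm σ k l (fun x => f x * u x) ≠ ⊤ ∧
      gnorm σ k l (fun x => f x * u x) ≤ ENNReal.ofReal C * gnorm σ k l u := by
  obtain ⟨K, hK, hfK⟩ := hfG
  obtain ⟨Φ, hΦ, hE⟩ := exists_gevreyEnergy_mul_le hσ hσσ' hK hf hfK k l
  refine ⟨2 * Real.sqrt Φ, by positivity, fun u hu hgu => ?_⟩
  have hle :
      gnorm σ k l (fun x => f x * u x) ≤ ENNReal.ofReal (2 * Real.sqrt Φ) * gnorm σ k l u :=
    calc gnorm σ k l (fun x => f x * u x)
        ≤ 2 * gevreyEnergy σ k l (fun x => f x * u x) ^ (1 / 2 : ℝ) :=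
          gnorm_le_two_mul_gevreyEnergy_rpow hσ.le _
      _ ≤ 2 * (ENNReal.ofReal Φ * gevreyEnergy σ k l u) ^ (1 / 2 : ℝ) := by gcongr; exact hE u hu
      _ = ENNReal.ofReal (2 * Real.sqrt Φ) * gevreyEnergy σ k l u ^ (1 / 2 : ℝ) := by
          rw [ENNReal.mul_rpow_of_nonneg _ _ (by norm_num), ENNReal.ofReal_rpow_of_nonneg hΦ.le
            (by norm_num), ← Real.sqrt_eq_rpow, ENNReal.ofReal_mul zero_le_two, mul_assoc]
          norm_num
      _ ≤ ENNReal.ofReal (2 * Real.sqrt Φ) * gnorm σ k l u := by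
          gcongr
          exact gevreyEnergy_rpow_le_gnorm hσ.le u
  exact ⟨ne_top_of_le_ne_top (ENNReal.mul_ne_top ENNReal.ofReal_ne_top hgu) hle, hle⟩

/-- If `0 < σ < σ'`, `k ∈ {0,1,2}`, `l ∈ {0,1}` and `f` is `(σ',2)`-Gevrey,
then there is `C > 0` (depending only on `σ, σ', k, l, f`) such that for every smooth `u`
with `‖u‖_{σ,k,l} < ∞` one has `‖f·u‖_{σ,k,l} ≤ C ‖u‖_{σ,k,l}` (in particular it is finite). -/
theorem statement1 (σ σ' : ℝ) (hσ : 0 < σ) (hσσ' : σ < σ') (k l : ℕ) (hk : k ≤ 2) (hl : l ≤ 1)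
    (f : ℝ → ℂ) (hf : ContDiff ℝ (⊤ : ℕ∞) f) (hfG : IsGevrey2 σ' f) :
    ∃ C : ℝ, 0 < C ∧ ∀ u : ℝ → ℂ, ContDiff ℝ (⊤ : ℕ∞) u → gnorm σ k l u ≠ ⊤ →
      gnorm σ k l (fun x => f x * u x) ≠ ⊤ ∧
      gnorm σ k l (fun x => f x * u x) ≤ ENNReal.ofReal C * gnorm σ k l u :=
  statement1_general σ σ' hσ hσσ' k l f hf hfG
end
end

section
/- Let κ≥0, σ>0, λ∈ℝ, let N, M be integers with 0≤N≤M, and let s∈Ω^1_σ. Suppose u,f∈C^∞([0,1];ℂ) satisfy the shifted ODE with parameters (κ,s,N,λ). Then [u']_σ^{N,M} ≤ (1/C_{s,σ})·[f]_σ^{N,M}. -/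
noncomputable section

open Filter Set MeasureTheory
open scoped ENNReal Topology

/-!
At `x = 0` the coefficient `κx + x²` vanishes, so differentiating the equation `n ≥ N` times at
`0` (which kills the polynomial term of degree `< N`) gives the two-term recurrence
`(s + (n+1)κ) u^{(n+1)}(0) + (n(n+1) − N(N+1)) u^{(n)}(0) = f^{(n)}(0)`.
As `|s + t| ≥ C_{s,σ} + σ` for `t ≥ 0`, and the boundary weights `w_n` satisfy
`w_{n+1} ((n+1)(n+2))² = σ² w_n`, the numbers `a_n = √w_n |u^{(n+1)}(0)|`, `b_n = √w_n |f^{(n)}(0)|`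
obey `(C + σ) a_{n+1} ≤ b_{n+1} + σ a_n` with `C = C_{s,σ}`. Squaring with the weighted AM-GM inequality and
telescoping gives `C² Σ a_n² ≤ Σ b_n²`.
-/

open Finset

section IteratedDeriv

variable {𝕜 F : Type*} [NontriviallyNormedField 𝕜] [NormedAddCommGroup F] [NormedSpace 𝕜 F]

theorem iteratedDeriv_succ_id_smul_zero {g : 𝕜 → F} {n : ℕ} (hg : ContDiffAt 𝕜 (n + 1) g 0) :
    iteratedDeriv (n + 1) (fun y => y • g y) 0 = (n + 1) • iteratedDeriv n g 0 := by
  have := iteratedDerivWithin_smul (Set.mem_univ (0 : 𝕜)) uniqueDiffOn_univ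
    (f := fun y : 𝕜 => y) (n := n + 1) contDiffWithinAt_id hg.contDiffWithinAt
  simp only [iteratedDerivWithin_univ] at this
  rw [show (fun y => y • g y) = (fun y : 𝕜 => y) • g from rfl, this, sum_range_succ',
    sum_range_succ']
  simp [iteratedDeriv_fun_id_zero, sum_eq_zero]

theorem iteratedDeriv_id_smul_deriv_zero {g : 𝕜 → F} (n : ℕ) (hg : ContDiff 𝕜 (n + 1) g) :
    iteratedDeriv n (fun y => y • deriv g y) 0 = n • iteratedDeriv n g 0 := by
  cases n with
  | zero => simp
  | succ n =>
    rw [iteratedDeriv_succ_id_smul_zero (by exact_mod_cast hg.deriv'.contDiffAt),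
      iteratedDeriv_succ']

theorem iteratedDeriv_succ_quadratic_smul_deriv_zero (κ : 𝕜) {u : 𝕜 → F} (n : ℕ)
    (hu : ContDiff 𝕜 (n + 2) u) :
    iteratedDeriv (n + 1) (fun y => κ • (y • deriv u y) + y • (y • deriv u y)) 0
      = (n + 1) • (κ • iteratedDeriv (n + 1) u 0 + n • iteratedDeriv n u 0) := by
  have hu' : ContDiff 𝕜 (n + 1) (deriv u) := hu.deriv'
  rw [iteratedDeriv_fun_add (by fun_prop) (by fun_prop), iteratedDeriv_fun_const_smul (by fun_prop),
    iteratedDeriv_id_smul_deriv_zero _ (by exact_mod_cast hu),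
    iteratedDeriv_succ_id_smul_zero (by fun_prop),
    iteratedDeriv_id_smul_deriv_zero _ (hu.of_le (by norm_cast; omega)), smul_add, smul_comm κ]

theorem iteratedDeriv_sum_sub_pow_smul (a : 𝕜) (c : ℕ → F) {N n : ℕ} (hn : N ≤ n) (x : 𝕜) :
    iteratedDeriv n (fun y => ∑ i ∈ range N, (y - a) ^ i • c i) x = 0 := by
  rw [iteratedDeriv_fun_sum (fun i _ => by fun_prop)]
  refine sum_eq_zero fun i hi => ?_
  rw [iteratedDeriv_smul_const (by fun_prop), iteratedDeriv_comp_sub_const n (· ^ i)]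
  dsimp only
  rw [iteratedDeriv_pow, Nat.descFactorial_eq_zero_iff_lt.mpr (by simp at hi; omega)]
  simp

end IteratedDeriv

theorem iteratedDeriv_eq_of_eqOn_Icc {F : Type*} [NormedAddCommGroup F] [NormedSpace ℝ F]
    {f g : ℝ → F} {a b x : ℝ} {n : ℕ} (hab : a < b) (hx : x ∈ Set.Icc a b)
    (hf : ContDiffAt ℝ n f x) (hg : ContDiffAt ℝ n g x) (hfg : Set.EqOn f g (Set.Icc a b)) :
    iteratedDeriv n f x = iteratedDeriv n g x := by
  rw [← iteratedDerivWithin_eq_iteratedDeriv (uniqueDiffOn_Icc hab) hf hx,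
    ← iteratedDerivWithin_eq_iteratedDeriv (uniqueDiffOn_Icc hab) hg hx,
    iteratedDerivWithin_congr hfg hx]

/-- The left-hand side of `ShiftedODE`, with the real coefficients acting by `•`, the form the
general `iteratedDeriv` lemmas above handle. -/
def shiftedOp (κ : ℝ) (s : ℂ) (N : ℕ) (lam : ℝ) (u : ℝ → ℂ) (x : ℝ) : ℂ :=
  deriv (fun y => κ • (y • deriv u y) + y • (y • deriv u y)) x + s * deriv u x
    - N * (N + 1) * u x
    + (lam : ℂ) * ∑ i ∈ range N, ((x - 1) ^ i : ℝ) • (iteratedDeriv (i + 1) u 1 / i.factorial)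

section ShiftedOp

variable {κ lam : ℝ} {s : ℂ} {N n : ℕ} {u f : ℝ → ℂ}

theorem ShiftedODE.eqOn_shiftedOp (hode : ShiftedODE κ s N lam u f) :
    Set.EqOn (shiftedOp κ s N lam u) f (Set.Icc 0 1) := by
  intro x hx
  rw [← hode.1 x hx, shiftedOp]
  congr 4 <;> funext <;> simp only [Complex.real_smul] <;> push_cast <;> ring

theorem contDiff_shiftedOp (hu : ContDiff ℝ (n + 2) u) :
    ContDiff ℝ n (shiftedOp κ s N lam u) := by
  have hv : ContDiff ℝ (n + 1) (deriv u) := hu.deriv'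
  have hφ : ContDiff ℝ n (deriv fun y => κ • (y • deriv u y) + y • (y • deriv u y)) :=
    (by fun_prop : ContDiff ℝ (n + 1) _).deriv'
  have hu' : ContDiff ℝ n u := hu.of_le (by norm_cast; omega)
  have hv' : ContDiff ℝ n (deriv u) := hv.of_le (by norm_cast; omega)
  unfold shiftedOp
  fun_prop

theorem iteratedDeriv_shiftedOp_zero (hu : ContDiff ℝ (n + 2) u) (hn : N ≤ n) :
    iteratedDeriv n (shiftedOp κ s N lam u) 0
      = (s + (n + 1) * κ) * iteratedDeriv n (deriv u) 0
        + ((n : ℂ) * (n + 1) - N * (N + 1)) * iteratedDeriv n u 0 := by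
  have hv : ContDiff ℝ (n + 1) (deriv u) := hu.deriv'
  have hφ : ContDiff ℝ n (deriv fun y => κ • (y • deriv u y) + y • (y • deriv u y)) :=
    (by fun_prop : ContDiff ℝ (n + 1) _).deriv'
  have hu' : ContDiff ℝ n u := hu.of_le (by norm_cast; omega)
  have hv' : ContDiff ℝ n (deriv u) := hv.of_le (by norm_cast; omega)
  unfold shiftedOp
  rw [iteratedDeriv_fun_add (by fun_prop) (by fun_prop),
    iteratedDeriv_fun_sub (by fun_prop) (by fun_prop),
    iteratedDeriv_fun_add (by fun_prop) (by fun_prop), iteratedDeriv_const_mul _ (by fun_prop),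
    iteratedDeriv_const_mul _ (by fun_prop), iteratedDeriv_const_mul _ (by fun_prop),
    iteratedDeriv_sum_sub_pow_smul _ _ hn, ← iteratedDeriv_succ',
    iteratedDeriv_succ_quadratic_smul_deriv_zero _ _ hu, ← iteratedDeriv_succ']
  simp only [Complex.real_smul, nsmul_eq_mul]
  push_cast
  ring

theorem ShiftedODE.iteratedDeriv_recurrence (hode : ShiftedODE κ s N lam u f)
    (hu : ContDiff ℝ (⊤ : ℕ∞) u) (hf : ContDiff ℝ (⊤ : ℕ∞) f) (hn : N ≤ n) :
    (s + (n + 1) * κ) * iteratedDeriv n (deriv u) 0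
      + ((n : ℂ) * (n + 1) - N * (N + 1)) * iteratedDeriv n u 0 = iteratedDeriv n f 0 := by
  have hu' : ContDiff ℝ (n + 2) u := hu.of_le (WithTop.coe_le_coe.2 le_top)
  rw [← iteratedDeriv_shiftedOp_zero hu' hn]
  exact iteratedDeriv_eq_of_eqOn_Icc zero_lt_one (by simp) (contDiff_shiftedOp hu').contDiffAt
    (hf.of_le (WithTop.coe_le_coe.2 le_top)).contDiffAt hode.eqOn_shiftedOp

end ShiftedOp

theorem Csig_pos {s : ℂ} {σ : ℝ} (hs : s ∈ Omega1 σ) : 0 < Csig s σ := by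
  rcases hs with ⟨hre, him⟩ | ⟨hre, hnorm⟩
  · simp only [Csig, if_pos hre]; linarith
  · simp only [Csig, if_neg (not_le.2 hre)]; linarith

theorem Csig_add_le_norm_add_ofReal (s : ℂ) (σ : ℝ) {t : ℝ} (ht : 0 ≤ t) :
    Csig s σ + σ ≤ ‖s + t‖ := by
  unfold Csig
  split_ifs with hre
  · simpa using Complex.abs_im_le_norm (s + t)
  · have : ‖s‖ ^ 2 ≤ ‖s + t‖ ^ 2 := by
      simp only [Complex.sq_norm, Complex.normSq_apply, Complex.add_re, Complex.ofReal_re,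
        Complex.add_im, Complex.ofReal_im, add_zero]
      nlinarith
    simpa using (sq_le_sq₀ (norm_nonneg _) (norm_nonneg _)).1 this

theorem ShiftedODE.norm_iteratedDeriv_deriv_le {κ lam : ℝ} {s : ℂ} {N : ℕ} {u f : ℝ → ℂ}
    (hode : ShiftedODE κ s N lam u f) (σ : ℝ) (hκ : 0 ≤ κ) (hu : ContDiff ℝ (⊤ : ℕ∞) u)
    (hf : ContDiff ℝ (⊤ : ℕ∞) f) (n : ℕ) (hn : N ≤ n) :
    (Csig s σ + σ) * ‖iteratedDeriv n (deriv u) 0‖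
      ≤ ‖iteratedDeriv n f 0‖ + ((n : ℝ) * (n + 1) - N * (N + 1)) * ‖iteratedDeriv n u 0‖ := by
  have hr : (0 : ℝ) ≤ n * (n + 1) - N * (N + 1) := by
    have : (N : ℝ) ≤ n := by exact_mod_cast hn
    nlinarith
  have hc : Csig s σ + σ ≤ ‖s + (n + 1) * κ‖ := by
    simpa using Csig_add_le_norm_add_ofReal s σ (by positivity : 0 ≤ ((n : ℝ) + 1) * κ)
  calc (Csig s σ + σ) * ‖iteratedDeriv n (deriv u) 0‖
      ≤ ‖(s + (n + 1) * κ) * iteratedDeriv n (deriv u) 0‖ := by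
        rw [norm_mul]; gcongr
    _ = ‖iteratedDeriv n f 0 - (n * (n + 1) - N * (N + 1) : ℝ) • iteratedDeriv n u 0‖ := by
        rw [← hode.iteratedDeriv_recurrence hu hf hn, Complex.real_smul]; push_cast; ring_nf
    _ ≤ _ := by
        refine (norm_sub_le _ _).trans_eq ?_
        rw [norm_smul, Real.norm_of_nonneg hr]

section Recurrence

variable {C σ : ℝ}

theorem mul_sq_le_of_mul_le_add (hC : 0 < C) (hσ : 0 ≤ σ) {x y z : ℝ} (hx : 0 ≤ x)
    (h : (C + σ) * x ≤ y + σ * z) : (C + σ) * x ^ 2 ≤ y ^ 2 / C + σ * z ^ 2 := by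
  have hsq : ((C + σ) * x) ^ 2 ≤ (y + σ * z) ^ 2 := pow_le_pow_left₀ (by positivity) h 2
  have hamgm : (y + σ * z) ^ 2 ≤ (C + σ) * (y ^ 2 / C + σ * z ^ 2) := by
    have e : (C + σ) * (y ^ 2 / C + σ * z ^ 2) - (y + σ * z) ^ 2 = σ * (y - C * z) ^ 2 / C := by
      field_simp; ring
    have : 0 ≤ σ * (y - C * z) ^ 2 / C := by positivity
    linarith
  nlinarith

variable {a b : ℕ → ℝ} {N : ℕ}

theorem mul_sum_sq_add_le_of_recurrence (hC : 0 < C) (hσ : 0 ≤ σ) (ha : ∀ n, 0 ≤ a n)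
    (h₀ : (C + σ) * a N ≤ b N)
    (hsucc : ∀ n, N ≤ n → (C + σ) * a (n + 1) ≤ b (n + 1) + σ * a n) {M : ℕ} (hNM : N ≤ M) :
    C * ∑ n ∈ Icc N M, a n ^ 2 + σ * a M ^ 2 ≤ (∑ n ∈ Icc N M, b n ^ 2) / C := by
  induction M, hNM using Nat.le_induction with
  | base =>
    have := mul_sq_le_of_mul_le_add hC hσ (ha N) (z := 0) (by simpa using h₀)
    simp only [Finset.Icc_self, sum_singleton]
    nlinarith
  | succ M hNM ih =>
    have := mul_sq_le_of_mul_le_add hC hσ (ha (M + 1)) (hsucc M hNM)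
    rw [sum_Icc_succ_top (by omega), sum_Icc_succ_top (by omega), add_div]
    nlinarith

theorem sqrt_sum_sq_le_of_recurrence (hC : 0 < C) (hσ : 0 ≤ σ) (ha : ∀ n, 0 ≤ a n)
    (h₀ : (C + σ) * a N ≤ b N)
    (hsucc : ∀ n, N ≤ n → (C + σ) * a (n + 1) ≤ b (n + 1) + σ * a n) {M : ℕ} (hNM : N ≤ M) :
    √(∑ n ∈ Icc N M, a n ^ 2) ≤ 1 / C * √(∑ n ∈ Icc N M, b n ^ 2) := by
  have key := (le_div_iff₀ hC).1 (mul_sum_sq_add_le_of_recurrence hC hσ ha h₀ hsucc hNM)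
  have : ∑ n ∈ Icc N M, a n ^ 2 ≤ (∑ n ∈ Icc N M, b n ^ 2) / C ^ 2 := by
    rw [le_div_iff₀ (by positivity)]
    nlinarith [mul_nonneg hσ (sq_nonneg (a M))]
  calc √(∑ n ∈ Icc N M, a n ^ 2) ≤ √((∑ n ∈ Icc N M, b n ^ 2) / C ^ 2) := Real.sqrt_le_sqrt this
    _ = 1 / C * √(∑ n ∈ Icc N M, b n ^ 2) := by
      rw [Real.sqrt_div' _ (sq_nonneg C), Real.sqrt_sq hC.le, one_div_mul_eq_div]

end Recurrence

def bWeight (σ : ℝ) (n : ℕ) : ℝ :=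
  σ ^ (2 * n + 1) / ((n.factorial : ℝ) ^ 2 * ((n + 1).factorial : ℝ) ^ 2)

theorem bWeight_succ_mul (σ : ℝ) (n : ℕ) :
    bWeight σ (n + 1) * (((n : ℝ) + 1) * (n + 2)) ^ 2 = σ ^ 2 * bWeight σ n := by
  simp only [bWeight, Nat.factorial_succ (n + 1), Nat.factorial_succ n]
  push_cast
  field_simp
  ring

theorem sqrt_bWeight_succ_mul {σ : ℝ} (hσ : 0 ≤ σ) (n : ℕ) :
    √(bWeight σ (n + 1)) * (((n : ℝ) + 1) * (n + 2)) = σ * √(bWeight σ n) := by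
  rw [← Real.sqrt_sq (by positivity : (0 : ℝ) ≤ ((n : ℝ) + 1) * (n + 2)),
    ← Real.sqrt_mul' _ (sq_nonneg _), bWeight_succ_mul, Real.sqrt_mul (sq_nonneg σ),
    Real.sqrt_sq hσ]

section BoundaryTerms

variable {σ D : ℝ} {v f : ℝ → ℂ} {n : ℕ}

theorem sqrt_bTerm (σ : ℝ) (u : ℝ → ℂ) (n : ℕ) :
    √(bTerm σ u n) = √(bWeight σ n) * ‖iteratedDeriv n u 0‖ := by
  rw [bTerm, ← bWeight, Real.sqrt_mul' _ (by positivity), Real.sqrt_sq (norm_nonneg _)]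

theorem bsemPR_eq_sqrt_sum_sq (hσ : 0 ≤ σ) (N M : ℕ) (u : ℝ → ℂ) :
    bsemPR σ N M u = √(∑ n ∈ Icc N M, √(bTerm σ u n) ^ 2) := by
  simp only [bsemPR, Real.sq_sqrt (by unfold bTerm; positivity : 0 ≤ bTerm σ u _)]

theorem mul_sqrt_bTerm_le (h : D * ‖iteratedDeriv n v 0‖ ≤ ‖iteratedDeriv n f 0‖) :
    D * √(bTerm σ v n) ≤ √(bTerm σ f n) := by
  rw [sqrt_bTerm, sqrt_bTerm, mul_left_comm]
  exact mul_le_mul_of_nonneg_left h (Real.sqrt_nonneg _)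

theorem mul_sqrt_bTerm_succ_le (hσ : 0 ≤ σ)
    (h : D * ‖iteratedDeriv (n + 1) v 0‖
      ≤ ‖iteratedDeriv (n + 1) f 0‖ + ((n : ℝ) + 1) * (n + 2) * ‖iteratedDeriv n v 0‖) :
    D * √(bTerm σ v (n + 1)) ≤ √(bTerm σ f (n + 1)) + σ * √(bTerm σ v n) := by
  rw [sqrt_bTerm, sqrt_bTerm, sqrt_bTerm, mul_left_comm, ← mul_assoc σ,
    ← sqrt_bWeight_succ_mul hσ]
  calc √(bWeight σ (n + 1)) * (D * ‖iteratedDeriv (n + 1) v 0‖)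
      ≤ √(bWeight σ (n + 1)) * (‖iteratedDeriv (n + 1) f 0‖
          + ((n : ℝ) + 1) * (n + 2) * ‖iteratedDeriv n v 0‖) := by gcongr
    _ = _ := by ring

end BoundaryTerms

/-- Boundary estimate (Lemma `Best`): for `s ∈ Ω¹_σ` and solutions of the
shifted ODE, `[u']_σ^{N,M} ≤ (1/C_{s,σ}) [f]_σ^{N,M}`. -/
theorem statement6 (κ σ lam : ℝ) (s : ℂ) (N M : ℕ)
    (hκ : 0 ≤ κ) (hσ : 0 < σ) (hNM : N ≤ M) (hs : s ∈ Omega1 σ)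
    (u f : ℝ → ℂ) (hu : ContDiff ℝ (⊤ : ℕ∞) u) (hf : ContDiff ℝ (⊤ : ℕ∞) f)
    (hode : ShiftedODE κ s N lam u f) :
    bsemPR σ N M (deriv u) ≤ (1 / Csig s σ) * bsemPR σ N M f := by
  have hbound := hode.norm_iteratedDeriv_deriv_le σ hκ hu hf
  rw [bsemPR_eq_sqrt_sum_sq hσ.le, bsemPR_eq_sqrt_sum_sq hσ.le]
  refine sqrt_sum_sq_le_of_recurrence (Csig_pos hs) hσ.le (fun _ => Real.sqrt_nonneg _) ?_ ?_ hNM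
  · exact mul_sqrt_bTerm_le (by simpa using hbound N le_rfl)
  · intro n hn
    refine mul_sqrt_bTerm_succ_le hσ.le ((hbound (n + 1) (by omega)).trans ?_)
    rw [iteratedDeriv_succ' (f := u)]
    gcongr
    push_cast
    nlinarith [mul_nonneg (Nat.cast_nonneg (α := ℝ) N) (Nat.cast_nonneg (α := ℝ) (N + 1))]
end
end

section
/- There exists φ₀ > 2π/3 such that for every s∈ℂ∖{0} with |arg s| < φ₀ (where arg denotes the principal argument, valued in (−π,π]) there exists σ>0 with s∈Ω_σ. -/
noncomputable section

open Filter Set MeasureTheory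
open scoped ENNReal Topology

theorem Real.arccos_neg_one_half : Real.arccos (-(1 / 2)) = 2 * Real.pi / 3 := by
  rw [Real.arccos_neg, ← Real.cos_pi_div_three,
    Real.arccos_cos (by positivity) (by linarith [Real.pi_pos])]
  ring

theorem Real.two_pi_div_three_lt_arccos {c : ℝ} (hc₁ : -1 ≤ c) (hc₂ : c < -(1 / 2)) :
    2 * Real.pi / 3 < Real.arccos c :=
  Real.arccos_neg_one_half ▸ Real.arccos_lt_arccos hc₁ hc₂ (by norm_num)

theorem Complex.mul_norm_lt_re_of_abs_arg_lt_arccos {s : ℂ} {c : ℝ} (hs : s ≠ 0)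
    (hc₁ : -1 ≤ c) (hc₂ : c ≤ 1) (h : |Complex.arg s| < Real.arccos c) : c * ‖s‖ < s.re := by
  have hcos : c < s.re / ‖s‖ := by
    rw [← Complex.cos_arg hs, ← Real.cos_abs, ← Real.cos_arccos hc₁ hc₂]
    exact Real.cos_lt_cos_of_nonneg_of_le_pi (abs_nonneg _) (Real.arccos_le_pi c) h
  exact (lt_div_iff₀ (norm_pos_iff.mpr hs)).mp hcos

theorem mem_Omega1_of_sq_add_sq_lt {σ : ℝ} {s : ℂ} (h : σ ^ 2 + s.re ^ 2 < ‖s‖ ^ 2) :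
    s ∈ Omega1 σ := by
  have him : σ ^ 2 < s.im ^ 2 := by
    rw [Complex.sq_norm, Complex.normSq_apply] at h
    nlinarith
  rcases le_or_gt s.re 0 with hre | hre
  · exact Or.inl ⟨hre, (le_abs_self σ).trans_lt (sq_lt_sq.mp him)⟩
  · refine Or.inr ⟨hre, (le_abs_self σ).trans_lt ?_⟩
    simpa [abs_norm] using sq_lt_sq.mp (show σ ^ 2 < ‖s‖ ^ 2 by nlinarith)

theorem mem_Omega_of_re_nonneg {σ : ℝ} {s : ℂ} (hσ : 0 < σ) (hσs : σ < ‖s‖)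
    (hre : 0 ≤ s.re) : s ∈ Omega σ := by
  have hden : 0 < ‖s‖ + s.re := by linarith
  refine ⟨?_, Or.inl ⟨by linarith, ?_⟩⟩
  · rcases hre.eq_or_lt with hre0 | hre0
    · exact mem_Omega1_of_sq_add_sq_lt (by rw [← hre0]; nlinarith)
    · exact Or.inr ⟨hre0, hσs⟩
  · calc -s.re * ‖s‖ / (2 * (‖s‖ + s.re)) ≤ 0 :=
          div_nonpos_of_nonpos_of_nonneg (by nlinarith [norm_nonneg s]) (by linarith)
      _ < σ := hσ

/- With `σ = 3‖s‖/10` and `x = Re s / ‖s‖`, the `Ω³` margin equals `‖s‖² (12 - 18x - 64x²) / 100`,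
which stays positive down to `x ≈ -0.596`, just below `cos (2π/3) = -1/2`. -/
theorem mem_Omega_three_tenths_norm_of_re_neg {s : ℂ} (hre : s.re < 0)
    (hlow : -(11 / 20) * ‖s‖ < s.re) : s ∈ Omega (3 / 10 * ‖s‖) := by
  have hs : s ≠ 0 := fun h => by simp [h] at hre
  have hr : 0 < ‖s‖ := norm_pos_iff.mpr hs
  refine ⟨mem_Omega1_of_sq_add_sq_lt (by nlinarith), Or.inr ⟨hs, ?_⟩⟩
  have hmargin : 3 / 10 * ‖s‖ * (‖s‖ - 3 / 10 * ‖s‖ + s.re)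
      - (3 / 10 * ‖s‖ * (1 + s.re / ‖s‖) + s.re / 2) ^ 2
      = (12 * ‖s‖ ^ 2 - 18 * ‖s‖ * s.re - 64 * s.re ^ 2) / 100 := by
    field_simp
    ring
  rw [hmargin]
  have : 0 < 12 * ‖s‖ ^ 2 - 18 * ‖s‖ * s.re - 64 * s.re ^ 2 := by
    nlinarith [mul_pos (sub_pos.mpr hlow) (neg_pos.mpr hre)]
  positivity

/-- There is `φ₀ > 2π/3` such that every `s ≠ 0` with `|arg s| < φ₀` lies in
`Ω_σ` for some `σ > 0`. -/
theorem statement9 :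
    ∃ φ₀ : ℝ, 2 * Real.pi / 3 < φ₀ ∧
      ∀ s : ℂ, s ≠ 0 → |Complex.arg s| < φ₀ → ∃ σ : ℝ, 0 < σ ∧ s ∈ Omega σ := by
  refine ⟨Real.arccos (-(11 / 20)), Real.two_pi_div_three_lt_arccos (by norm_num) (by norm_num),
    fun s hs harg => ⟨3 / 10 * ‖s‖, by positivity, ?_⟩⟩
  have hr : 0 < ‖s‖ := norm_pos_iff.mpr hs
  rcases le_or_gt 0 s.re with hre | hre
  · exact mem_Omega_of_re_nonneg (by positivity) (by linarith) hre
  · exact mem_Omega_three_tenths_norm_of_re_neg hre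
      (Complex.mul_norm_lt_re_of_abs_arg_lt_arccos hs (by norm_num) (by norm_num) harg)
end
end

section
/- There exists φ₁ > π/2 such that for every s∈ℂ∖{0} with π/2 < |arg s| < φ₁ (where arg denotes the principal argument, valued in (−π,π]) there exists σ>0 with s∈Ω_σ and σ < (Re √s)^2, where √s denotes the principal branch of the square root (the branch with Re √s > 0 for s off the negative real axis). -/
noncomputable section

open Filter Set MeasureTheory
open scoped ENNReal Topology

/-
Take `φ₁ = arccos (-1/4)`. For `π/2 < |arg s| < φ₁` we have `-|s|/4 < Re s < 0`, and
`σ = (|s| + Re s)/4` works: it is half of `(Re √s)² = (|s| + Re s)/2`, it is below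
`|Im s| = √((|s| - Re s)(|s| + Re s))`, and `-Re s · |s| < (|s| + Re s)²/2` because
`-Re s < |s|/4` while `|s| + Re s > 3|s|/4`.
-/

namespace Complex

theorem re_sq_of_sq_eq {w s : ℂ} (h : w ^ 2 = s) : w.re ^ 2 = (‖s‖ + s.re) / 2 := by
  have hnorm : w.re ^ 2 + w.im ^ 2 = ‖s‖ := by
    rw [← h, norm_pow, ← normSq_add_mul_I, re_add_im, normSq_eq_norm_sq]
  have hre : w.re ^ 2 - w.im ^ 2 = s.re := by
    rw [← h, sq w, mul_re]
    ring
  linarith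

theorem cpow_one_half_re_sq (s : ℂ) : (s ^ ((1 : ℂ) / 2)).re ^ 2 = (‖s‖ + s.re) / 2 :=
  re_sq_of_sq_eq (by rw [one_div]; exact cpow_ofNat_inv_pow s 2)

theorem re_neg_of_pi_div_two_lt_abs_arg {s : ℂ} (h : Real.pi / 2 < |arg s|) : s.re < 0 :=
  lt_of_not_ge fun hre => (abs_arg_le_pi_div_two_iff.mpr hre).not_gt h

theorem mul_norm_lt_re_of_abs_arg_lt_arccos_s17 {s : ℂ} {c : ℝ} (hs : s ≠ 0) (hc₀ : -1 ≤ c)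
    (hc₁ : c ≤ 1) (h : |arg s| < Real.arccos c) : c * ‖s‖ < s.re := by
  have hcos : c < Real.cos (arg s) := by
    have := Real.cos_lt_cos_of_nonneg_of_le_pi (abs_nonneg _) (Real.arccos_le_pi c) h
    rwa [Real.cos_arccos hc₀ hc₁, Real.cos_abs] at this
  rwa [cos_arg hs, lt_div_iff₀ (norm_pos_iff.mpr hs)] at hcos

end Complex

theorem mem_Omega1_of_re_nonpos {s : ℂ} {σ : ℝ} (hre : s.re ≤ 0)
    (hσ : σ ^ 2 < ‖s‖ ^ 2 - s.re ^ 2) : s ∈ Omega1 σ := by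
  rw [Complex.sq_norm_sub_sq_re, ← sq_abs s.im] at hσ
  exact Or.inl ⟨hre, lt_of_pow_lt_pow_left₀ 2 (abs_nonneg _) hσ⟩

theorem mem_Omega_norm_add_re_div_four {s : ℂ} (hre : s.re ≤ 0) (hlow : -(‖s‖ / 4) < s.re) :
    s ∈ Omega ((‖s‖ + s.re) / 4) := by
  refine ⟨mem_Omega1_of_re_nonpos hre (by nlinarith), Or.inl ⟨by linarith, ?_⟩⟩
  rw [div_lt_div_iff₀ (by linarith) (by norm_num)]
  nlinarith

/-- There is `φ₁ > π/2` such that every `s ≠ 0` with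
`π/2 < |arg s| < φ₁` lies in `Ω_σ` for some `σ > 0` with `σ < (Re √s)²`
(principal square root). -/
theorem statement17 :
    ∃ φ₁ : ℝ, Real.pi / 2 < φ₁ ∧
      ∀ s : ℂ, s ≠ 0 → Real.pi / 2 < |Complex.arg s| → |Complex.arg s| < φ₁ →
        ∃ σ : ℝ, 0 < σ ∧ s ∈ Omega σ ∧ σ < (s ^ ((1:ℂ)/2)).re ^ 2 := by
  refine ⟨Real.arccos (-(1 / 4)), by norm_num [lt_iff_not_ge], fun s hs hlarge hsmall => ?_⟩
  have hre := Complex.re_neg_of_pi_div_two_lt_abs_arg hlarge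
  have hlow := Complex.mul_norm_lt_re_of_abs_arg_lt_arccos_s17 hs (by norm_num) (by norm_num) hsmall
  refine ⟨(‖s‖ + s.re) / 4, by linarith, mem_Omega_norm_add_re_div_four hre.le (by linarith), ?_⟩
  rw [Complex.cpow_one_half_re_sq]
  linarith
end
end

section
/- Fix σ>0 and s∈ℂ with Re s < 0 and σ < (Re √s)^2, where √s denotes the principal branch of the square root (so Re √s > 0). Let (H_k)_{k≥1} be a sequence of complex numbers with sup_{k≥1} |H_k| e^{2 Re(√s) √k} < ∞. Then the power series u(x) := Σ_{k=1}^∞ H_k (1−x)^k and all its term-by-term derivatives converge uniformly on [0,1]; the resulting function u belongs to C^∞([0,1];ℂ), satisfies u(1)=0, and satisfies ‖u‖_{X^σ} < ∞, i.e. u∈X^σ. -/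
noncomputable section

open Filter Set MeasureTheory
open scoped ENNReal Topology

/-!
Each monomial `(1 - x)^(k+1)` is extended from `[0, 1]` to a smooth function on `ℝ` by cutting it
off at distance `1/(k+1)` to the left of `0`, where `|1 - x|^(k+1)` is still at most `e`, and
beyond `x = 2`. Every derivative then costs a factor `k + 1`, so the `n`-th derivatives of the
cut-off terms are `O((k+1)^n |H_{k+1}|)` on all of `ℝ`; the decay `|H_k| ≤ C e^{-2a√k}`,
`a = Re √s`, makes this summable and the series smooth, with termwise derivatives.

On `[0, 1]` the cutoffs are invisible and `|∂ⁿ(1 - x)^(k+1)| ≤ (k+1)^n`. Since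
`t^n e^{-2b√t} ≤ n!²/b^{2n}` (square `e^{b√t} ≥ (b√t)^n/n!`), the sum is Gevrey-2 with
constant `b²` for any `b < a`. Taking `√σ < b`, each term of the `X^σ` seminorms of `U'` is then
bounded by a polynomial in `n` times `(σ/b²)^{2n}`.
-/

open Real Nat
open scoped ContDiff

lemma pow_mul_exp_neg_two_mul_sqrt_le {b t : ℝ} (hb : 0 < b) (ht : 0 ≤ t) (n : ℕ) :
    t ^ n * exp (-(2 * b * √t)) ≤ (n ! : ℝ) ^ 2 / b ^ (2 * n) := by
  have hexp := pow_le_pow_left₀ (by positivity)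
    (Real.pow_div_factorial_le_exp _ (mul_nonneg hb.le (sqrt_nonneg t)) n) 2
  have hpow : ((b * √t) ^ n) ^ 2 = b ^ (2 * n) * t ^ n := by
    rw [← pow_mul, mul_pow, pow_mul' √t, sq_sqrt ht, mul_comm n 2]
  rw [div_pow, ← exp_nat_mul, hpow, div_le_iff₀ (by positivity), ← mul_assoc] at hexp
  push_cast at hexp
  rw [exp_neg, ← div_eq_mul_inv, div_le_div_iff₀ (exp_pos _) (by positivity)]
  linarith

lemma pow_mul_exp_neg_two_mul_sqrt_le_mul_exp {a b t : ℝ} (hb : 0 < b) (ht : 0 ≤ t) (n : ℕ) :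
    t ^ n * exp (-(2 * a * √t)) ≤ (n ! : ℝ) ^ 2 / b ^ (2 * n) * exp (-(2 * (a - b) * √t)) := by
  rw [show -(2 * a * √t) = -(2 * b * √t) + -(2 * (a - b) * √t) by ring, exp_add, ← mul_assoc]
  gcongr
  exact pow_mul_exp_neg_two_mul_sqrt_le hb ht n

lemma summable_succ_pow_mul_exp_neg_sqrt {c : ℝ} (hc : 0 < c) (p : ℕ) :
    Summable fun k : ℕ => ((k : ℝ) + 1) ^ p * exp (-(c * √((k : ℝ) + 1))) := by
  have hinv : Summable fun k : ℕ => 1 / ((k : ℝ) + 1) ^ 2 := by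
    simpa using (summable_nat_add_iff 1).2 (Real.summable_one_div_nat_pow.2 one_lt_two)
  refine .of_nonneg_of_le (fun k => by positivity) (fun k => ?_)
    (hinv.mul_left (((p + 2) ! : ℝ) ^ 2 / (c / 2) ^ (2 * (p + 2))))
  have h := pow_mul_exp_neg_two_mul_sqrt_le (half_pos hc) (by positivity : (0 : ℝ) ≤ k + 1) (p + 2)
  rw [show 2 * (c / 2) = c by ring] at h
  rw [mul_one_div, le_div_iff₀ (by positivity)]
  calc _ = ((k : ℝ) + 1) ^ (p + 2) * exp (-(c * √((k : ℝ) + 1))) := by ring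
    _ ≤ _ := h

lemma summable_succ_pow_mul_geometric {r : ℝ} (h0 : 0 < r) (h1 : r < 1) (p : ℕ) :
    Summable fun n : ℕ => ((n : ℝ) + 1) ^ p * r ^ n := by
  have h := (summable_nat_add_iff 1).2
    (summable_pow_mul_geometric_of_norm_lt_one p (by rwa [norm_of_nonneg h0.le]) (R := ℝ))
  refine (h.mul_left r⁻¹).congr fun n => ?_
  push_cast
  field_simp
  ring

section GevreyNorm

variable {σ σ' K : ℝ} {u : ℝ → ℂ}

lemma tsum_ite_ofReal_ne_top {f B : ℕ → ℝ} (N : ℕ) (hB : Summable B) (h : ∀ n, f n ≤ B n) :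
    (∑' n, if N ≤ n then ENNReal.ofReal (f n) else 0) ≠ ⊤ := by
  refine ne_top_of_le_ne_top (ENNReal.tsum_coe_ne_top_iff_summable.2 hB.toNNReal)
    (ENNReal.tsum_le_tsum fun n => ?_)
  split_ifs
  · exact ENNReal.ofReal_le_ofReal (h n)
  · exact zero_le

lemma gevrey_weight_mul_sq (hσ' : σ' ≠ 0) (n : ℕ) :
    σ ^ (2 * n) / ((n ! : ℝ) ^ 2 * ((n + 1) ! : ℝ) ^ 2) *
        (K * ((n + 1) ! : ℝ) ^ 2 / σ' ^ (n + 1)) ^ 2 =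
      K ^ 2 / σ' ^ 2 * (((n : ℝ) + 1) ^ 2 * ((σ / σ') ^ 2) ^ n) := by
  rw [Nat.factorial_succ, ← pow_mul, div_pow σ σ']
  push_cast
  field_simp
  ring

lemma norm_iteratedDeriv_deriv_le
    (hK : ∀ n : ℕ, ∀ x ∈ Icc (0 : ℝ) 1, ‖iteratedDeriv n u x‖ ≤ K * (n ! : ℝ) ^ 2 / σ' ^ n)
    (n : ℕ) {x : ℝ} (hx : x ∈ Icc (0 : ℝ) 1) :
    ‖iteratedDeriv n (deriv u) x‖ ≤ K * ((n + 1) ! : ℝ) ^ 2 / σ' ^ (n + 1) := by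
  rw [← iteratedDeriv_succ']
  exact hK (n + 1) x hx

lemma gTerm_deriv_le (hσ : 0 < σ) (hσ' : 0 < σ')
    (hK : ∀ n : ℕ, ∀ x ∈ Icc (0 : ℝ) 1, ‖iteratedDeriv n u x‖ ≤ K * (n ! : ℝ) ^ 2 / σ' ^ n)
    (κ n : ℕ) :
    gTerm σ κ 0 (deriv u) n ≤
      K ^ 2 / (σ ^ κ * σ' ^ 2) * (((n : ℝ) + 1) ^ (κ + 2) * ((σ / σ') ^ 2) ^ n) := by
  set M := K * ((n + 1) ! : ℝ) ^ 2 / σ' ^ (n + 1)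
  have hint : ∫ x in (0 : ℝ)..1, (x / σ) ^ κ * ‖iteratedDeriv n (deriv u) x‖ ^ 2 ≤
      (1 / σ) ^ κ * M ^ 2 := by
    have hbound : ∀ x ∈ uIoc (0 : ℝ) 1,
        ‖(x / σ) ^ κ * ‖iteratedDeriv n (deriv u) x‖ ^ 2‖ ≤ (1 / σ) ^ κ * M ^ 2 := by
      intro x hx
      rw [uIoc_of_le zero_le_one] at hx
      have hx' : x ∈ Icc (0 : ℝ) 1 := Ioc_subset_Icc_self hx
      rw [norm_mul, norm_pow, norm_pow, norm_norm, Real.norm_of_nonneg (div_nonneg hx'.1 hσ.le)]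
      gcongr
      · exact div_nonneg hx'.1 hσ.le
      · exact hx'.2
      · exact norm_iteratedDeriv_deriv_le hK n hx'
    refine (le_abs_self _).trans ?_
    simpa using intervalIntegral.norm_integral_le_of_norm_le_const hbound
  calc gTerm σ κ 0 (deriv u) n
      ≤ σ ^ (2 * n) / ((n ! : ℝ) ^ 2 * ((n + 1) ! : ℝ) ^ 2) * (n : ℝ) ^ (κ + 0) *
          ((1 / σ) ^ κ * M ^ 2) := by unfold gTerm; gcongr
    _ = K ^ 2 / σ' ^ 2 * (((n : ℝ) + 1) ^ 2 * ((σ / σ') ^ 2) ^ n) * (n : ℝ) ^ κ / σ ^ κ := by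
        rw [← gevrey_weight_mul_sq hσ'.ne', one_div_pow, Nat.add_zero]; ring
    _ ≤ K ^ 2 / σ' ^ 2 * (((n : ℝ) + 1) ^ 2 * ((σ / σ') ^ 2) ^ n) * ((n : ℝ) + 1) ^ κ / σ ^ κ := by
        gcongr; linarith
    _ = _ := by ring

lemma bTerm_deriv_le (hσ : 0 < σ) (hσ' : 0 < σ')
    (hK : ∀ n : ℕ, ∀ x ∈ Icc (0 : ℝ) 1, ‖iteratedDeriv n u x‖ ≤ K * (n ! : ℝ) ^ 2 / σ' ^ n)
    (n : ℕ) :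
    bTerm σ (deriv u) n ≤ σ * K ^ 2 / σ' ^ 2 * (((n : ℝ) + 1) ^ 2 * ((σ / σ') ^ 2) ^ n) := by
  calc bTerm σ (deriv u) n
      ≤ σ * (σ ^ (2 * n) / ((n ! : ℝ) ^ 2 * ((n + 1) ! : ℝ) ^ 2) *
          (K * ((n + 1) ! : ℝ) ^ 2 / σ' ^ (n + 1)) ^ 2) := by
        rw [bTerm, pow_succ, mul_comm _ σ, mul_div_assoc, mul_assoc]
        gcongr
        exact norm_iteratedDeriv_deriv_le hK n ⟨le_rfl, zero_le_one⟩
    _ = _ := by rw [gevrey_weight_mul_sq hσ'.ne']; ring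

theorem IsGevrey2.xnorm_ne_top (hu : IsGevrey2 σ' u) (hσ : 0 < σ) (hσσ' : σ < σ') :
    Xnorm σ u ≠ ⊤ := by
  obtain ⟨K, -, hK⟩ := hu
  have hσ' : 0 < σ' := hσ.trans hσσ'
  have hr : ∀ p : ℕ, Summable fun n : ℕ => ((n : ℝ) + 1) ^ p * ((σ / σ') ^ 2) ^ n := fun p =>
    summable_succ_pow_mul_geometric (by positivity)
      (pow_lt_one₀ (by positivity) ((div_lt_one hσ').2 hσσ') two_ne_zero) p
  have hf : ∀ κ : ℕ, fsem σ κ 0 0 (deriv u) ≠ ⊤ := fun κ =>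
    ENNReal.rpow_ne_top_of_nonneg (by norm_num) <|
      tsum_ite_ofReal_ne_top 0 ((hr (κ + 2)).mul_left _) (gTerm_deriv_le hσ hσ' hK κ)
  have hb : bsem σ 0 (deriv u) ≠ ⊤ :=
    ENNReal.rpow_ne_top_of_nonneg (by norm_num) <|
      tsum_ite_ofReal_ne_top 0 ((hr 2).mul_left _) (bTerm_deriv_le hσ hσ' hK)
  simp only [Xnorm, ne_eq, ENNReal.add_eq_top, not_or]
  exact ⟨⟨⟨hf 0, hf 1⟩, hf 2⟩, hb⟩

end GevreyNorm

def HasScaledDerivBounds (f : ℕ → ℝ → ℝ) (S : ℕ → Set ℝ) : Prop :=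
  ∀ n : ℕ, ∃ C : ℝ, ∀ k, ∀ x ∈ S k, ‖iteratedDeriv n (f k) x‖ ≤ C * ((k : ℝ) + 1) ^ n

namespace HasScaledDerivBounds

variable {f g : ℕ → ℝ → ℝ} {S : ℕ → Set ℝ}

theorem mul (hf : ∀ k, ContDiff ℝ ∞ (f k)) (hg : ∀ k, ContDiff ℝ ∞ (g k))
    (hfS : HasScaledDerivBounds f S) (hgS : HasScaledDerivBounds g S) :
    HasScaledDerivBounds (fun k x => f k x * g k x) S := by
  intro n
  choose Cf hCf using hfS
  choose Cg hCg using hgS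
  refine ⟨∑ i ∈ Finset.range (n + 1), n.choose i * (Cf i * Cg (n - i)), fun k x hx => ?_⟩
  rw [← norm_iteratedFDeriv_eq_norm_iteratedDeriv, Finset.sum_mul]
  refine (norm_iteratedFDeriv_mul_le (hf k) (hg k) x (mod_cast le_top)).trans
    (Finset.sum_le_sum fun i hi => ?_)
  have hin : i ≤ n := Nat.lt_succ_iff.mp (Finset.mem_range.mp hi)
  rw [norm_iteratedFDeriv_eq_norm_iteratedDeriv, norm_iteratedFDeriv_eq_norm_iteratedDeriv]
  calc (n.choose i : ℝ) * ‖iteratedDeriv i (f k) x‖ * ‖iteratedDeriv (n - i) (g k) x‖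
      ≤ n.choose i * (Cf i * ((k : ℝ) + 1) ^ i) * (Cg (n - i) * ((k : ℝ) + 1) ^ (n - i)) := by
        gcongr
        · exact mul_nonneg (Nat.cast_nonneg _) ((norm_nonneg _).trans (hCf i k x hx))
        · exact hCf i k x hx
        · exact hCg (n - i) k x hx
    _ = n.choose i * (Cf i * Cg (n - i)) * ((k : ℝ) + 1) ^ n := by
        rw [← Nat.add_sub_cancel' hin, pow_add, Nat.add_sub_cancel_left]
        ring

theorem univ_of_eventuallyEq_zero (hfS : HasScaledDerivBounds f S)
    (hzero : ∀ k, ∀ x ∉ S k, f k =ᶠ[𝓝 x] 0) :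
    HasScaledDerivBounds f fun _ => univ := by
  intro n
  obtain ⟨C, hC⟩ := hfS n
  refine ⟨max C 0, fun k x _ => ?_⟩
  by_cases hx : x ∈ S k
  · exact (hC k x hx).trans (by gcongr; exact le_max_left C 0)
  · rw [(hzero k x hx).iteratedDeriv_eq]
    simp only [Pi.zero_def, iteratedDeriv_const, ite_self, norm_zero]
    positivity

end HasScaledDerivBounds

lemma hasCompactSupport_deriv_smoothTransition : HasCompactSupport (deriv smoothTransition) := by
  refine HasCompactSupport.intro (isCompact_Icc (a := 0) (b := 1)) fun x hx => ?_
  rcases not_and_or.mp hx with hx | hx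
  · have h : smoothTransition =ᶠ[𝓝 x] fun _ => 0 :=
      eventually_of_mem (Iio_mem_nhds (not_le.mp hx)) fun y hy =>
        smoothTransition.zero_of_nonpos (le_of_lt hy)
    rw [h.deriv_eq, deriv_const]
  · have h : smoothTransition =ᶠ[𝓝 x] fun _ => 1 :=
      eventually_of_mem (Ioi_mem_nhds (not_le.mp hx)) fun y hy =>
        smoothTransition.one_of_one_le (le_of_lt hy)
    rw [h.deriv_eq, deriv_const]

lemma exists_norm_iteratedDeriv_smoothTransition_le (n : ℕ) :
    ∃ B, ∀ t, ‖iteratedDeriv n smoothTransition t‖ ≤ B := by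
  cases n with
  | zero =>
    exact ⟨1, fun t => by
      simpa [abs_of_nonneg (smoothTransition.nonneg t)] using smoothTransition.le_one t⟩
  | succ n =>
    have hcont : Continuous (iteratedFDeriv ℝ n (deriv smoothTransition)) :=
      (smoothTransition.contDiff.iterate_deriv 1).continuous_iteratedFDeriv (mod_cast le_top)
    obtain ⟨B, hB⟩ :=
      (hasCompactSupport_deriv_smoothTransition.iteratedFDeriv n).exists_bound_of_continuous hcont
    exact ⟨B, fun t => by
      rw [iteratedDeriv_succ', ← norm_iteratedFDeriv_eq_norm_iteratedDeriv]
      exact hB t⟩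

lemma hasScaledDerivBounds_smoothTransition_comp {a d : ℕ → ℝ} {A : ℝ}
    (ha : ∀ k, |a k| ≤ A * ((k : ℝ) + 1)) (S : ℕ → Set ℝ) :
    HasScaledDerivBounds (fun k x => smoothTransition (a k * x + d k)) S := by
  intro n
  obtain ⟨B, hB⟩ := exists_norm_iteratedDeriv_smoothTransition_le n
  refine ⟨A ^ n * B, fun k x _ => ?_⟩
  have hB0 : 0 ≤ B := (norm_nonneg _).trans (hB 0)
  have hcomp := congrFun (iteratedDeriv_comp_const_mul (n := n)
    (f := fun y => smoothTransition (y + d k))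
    (smoothTransition.contDiff.comp (contDiff_id.add contDiff_const)) (a k)) x
  rw [iteratedDeriv_comp_add_const] at hcomp
  simp only at hcomp ⊢
  rw [hcomp, norm_mul, norm_pow, Real.norm_eq_abs, mul_right_comm, ← mul_pow]
  have hA : 0 ≤ A * ((k : ℝ) + 1) := (abs_nonneg _).trans (ha k)
  gcongr
  exacts [ha k, hB _]

lemma norm_iteratedDeriv_one_sub_pow_le {m n : ℕ} {x r : ℝ} (hr : 1 ≤ r) (hx : |1 - x| ≤ r) :
    ‖iteratedDeriv n (fun y => (1 - y) ^ m) x‖ ≤ (m : ℝ) ^ n * r ^ m := by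
  rw [iteratedDeriv_comp_const_sub n (· ^ m) (1 : ℝ)]
  simp only [iteratedDeriv_pow, norm_smul, norm_pow, norm_neg, norm_one, one_pow, one_mul,
    norm_mul, Real.norm_eq_abs, Nat.abs_cast]
  gcongr
  · exact_mod_cast Nat.descFactorial_le_pow m n
  · calc |1 - x| ^ (m - n) ≤ r ^ (m - n) := by gcongr
      _ ≤ r ^ m := pow_le_pow_right₀ hr (Nat.sub_le _ _)

lemma hasScaledDerivBounds_one_sub_pow :
    HasScaledDerivBounds (fun k x => (1 - x) ^ (k + 1)) fun k => Icc (-((k : ℝ) + 1)⁻¹) 2 := by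
  refine fun n => ⟨exp 1, fun k x ⟨hx₁, hx₂⟩ => ?_⟩
  have hk : 0 ≤ ((k : ℝ) + 1)⁻¹ := by positivity
  calc _ ≤ ((k + 1 : ℕ) : ℝ) ^ n * (1 + ((k : ℝ) + 1)⁻¹) ^ (k + 1) :=
        norm_iteratedDeriv_one_sub_pow_le (le_add_of_nonneg_right hk)
          (abs_le.2 ⟨by linarith, by linarith⟩)
    _ ≤ exp 1 * ((k : ℝ) + 1) ^ n := by
        rw [mul_comm]
        push_cast
        gcongr
        simpa using Real.one_add_inv_pow_le_exp (n := k + 1)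

section SmoothSeries

variable {F : Type*} [NormedAddCommGroup F] [NormedSpace ℝ F] [CompleteSpace F]
  {f : ℕ → ℝ → F}

theorem iteratedDeriv_tsum_of_summable_bound (hf : ∀ k, ContDiff ℝ ∞ (f k))
    (hu : ∀ n, ∃ u : ℕ → ℝ, Summable u ∧ ∀ k x, ‖iteratedDeriv n (f k) x‖ ≤ u k) (n : ℕ) :
    iteratedDeriv n (fun x => ∑' k, f k x) = fun x => ∑' k, iteratedDeriv n (f k) x := by
  induction n with
  | zero => simp
  | succ n ih =>
    obtain ⟨u, hu_sum, hu_le⟩ := hu (n + 1)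
    obtain ⟨v, hv_sum, hv_le⟩ := hu n
    simp only [iteratedDeriv_succ, ih]
    refine deriv_tsum hu_sum (fun k => (hf k).differentiable_iteratedDeriv n (mod_cast
      WithTop.coe_lt_top _)) (fun k x => ?_) (.of_norm_bounded hv_sum fun k => hv_le k 0)
    rw [← iteratedDeriv_succ]
    exact hu_le k x

theorem contDiff_tsum_of_summable_bound (hf : ∀ k, ContDiff ℝ ∞ (f k))
    (hu : ∀ n, ∃ u : ℕ → ℝ, Summable u ∧ ∀ k x, ‖iteratedDeriv n (f k) x‖ ≤ u k) :
    ContDiff ℝ ∞ fun x => ∑' k, f k x := by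
  choose u hu_sum hu_le using hu
  refine contDiff_tsum hf (fun n _ => hu_sum n) fun n k x _ => ?_
  rw [norm_iteratedFDeriv_eq_norm_iteratedDeriv]
  exact hu_le n k x

theorem tendstoUniformlyOn_iteratedDeriv_tsum_of_summable_bound (hf : ∀ k, ContDiff ℝ ∞ (f k))
    (hu : ∀ n, ∃ u : ℕ → ℝ, Summable u ∧ ∀ k x, ‖iteratedDeriv n (f k) x‖ ≤ u k) (n : ℕ)
    (s : Set ℝ) :
    TendstoUniformlyOn (fun m x => ∑ k ∈ Finset.range m, iteratedDeriv n (f k) x)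
      (iteratedDeriv n fun x => ∑' k, f k x) atTop s := by
  obtain ⟨u, hu_sum, hu_le⟩ := hu n
  rw [iteratedDeriv_tsum_of_summable_bound hf hu n]
  exact tendstoUniformlyOn_tsum_nat hu_sum fun k x _ => hu_le k x

end SmoothSeries

def cutoffPow (k : ℕ) (x : ℝ) : ℝ :=
  smoothTransition (2 * ((k : ℝ) + 1) * x + 2) * smoothTransition (-2 * x + 4) * (1 - x) ^ (k + 1)

lemma contDiff_cutoffPow (k : ℕ) : ContDiff ℝ ∞ (cutoffPow k) := by
  unfold cutoffPow
  fun_prop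

lemma cutoffPow_eqOn (k : ℕ) :
    EqOn (cutoffPow k) (fun x => (1 - x) ^ (k + 1)) (Ioo (-(2 * ((k : ℝ) + 1))⁻¹) (3 / 2)) := by
  rintro x ⟨hx₁, hx₂⟩
  have hk : (0 : ℝ) < 2 * ((k : ℝ) + 1) := by positivity
  have hleft : -1 < 2 * ((k : ℝ) + 1) * x := by
    have := mul_lt_mul_of_pos_left hx₁ hk
    rwa [mul_neg, mul_inv_cancel₀ hk.ne'] at this
  simp only [cutoffPow, smoothTransition.one_of_one_le (by linarith : (1 : ℝ) ≤ 2 * (k + 1) * x + 2),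
    smoothTransition.one_of_one_le (by linarith : (1 : ℝ) ≤ -2 * x + 4), one_mul]

lemma cutoffPow_eventuallyEq_zero (k : ℕ) {x : ℝ} (hx : x ∉ Icc (-((k : ℝ) + 1)⁻¹) 2) :
    cutoffPow k =ᶠ[𝓝 x] 0 := by
  have hk : (0 : ℝ) < (k : ℝ) + 1 := by positivity
  rcases not_and_or.mp hx with hx | hx
  · filter_upwards [Iio_mem_nhds (not_le.mp hx)] with y hy
    have : 2 * ((k : ℝ) + 1) * y < -2 := by
      have := mul_lt_mul_of_pos_left hy hk
      rw [mul_neg, mul_inv_cancel₀ hk.ne'] at this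
      linarith
    simp only [cutoffPow, Pi.zero_apply, zero_mul,
      smoothTransition.zero_of_nonpos (by linarith : 2 * ((k : ℝ) + 1) * y + 2 ≤ 0)]
  · filter_upwards [Ioi_mem_nhds (not_le.mp hx)] with y (hy : 2 < y)
    simp only [cutoffPow, Pi.zero_apply, zero_mul, mul_zero,
      smoothTransition.zero_of_nonpos (by linarith : -2 * y + 4 ≤ 0)]

lemma hasScaledDerivBounds_cutoffPow : HasScaledDerivBounds cutoffPow fun _ => univ := by
  have hleft := hasScaledDerivBounds_smoothTransition_comp (a := fun k => 2 * ((k : ℝ) + 1))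
    (d := fun _ => 2) (A := 2) (fun k => by rw [abs_of_pos (by positivity)])
    (fun k => Icc (-((k : ℝ) + 1)⁻¹) 2)
  have hright := hasScaledDerivBounds_smoothTransition_comp (a := fun _ => -2) (d := fun _ => 4)
    (A := 2) (fun k => by norm_num)
    (fun k => Icc (-((k : ℝ) + 1)⁻¹) 2)
  refine (((hleft.mul (fun k => by fun_prop) (fun k => by fun_prop) hright).mul
    (fun k => by fun_prop) (fun k => by fun_prop) hasScaledDerivBounds_one_sub_pow)
    ).univ_of_eventuallyEq_zero fun k x hx => cutoffPow_eventuallyEq_zero k hx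

lemma norm_iteratedDeriv_smul_const {F : Type*} [NormedAddCommGroup F] [NormedSpace ℝ F]
    {f : ℝ → ℝ} (hf : ContDiff ℝ ∞ f) (c : F) (n : ℕ) (x : ℝ) :
    ‖iteratedDeriv n (fun y => f y • c) x‖ = ‖iteratedDeriv n f x‖ * ‖c‖ := by
  rw [iteratedDeriv_smul_const (hf.contDiffAt.of_le (mod_cast le_top)), norm_smul]

def cutoffSeries (H : ℕ → ℂ) (x : ℝ) : ℂ := ∑' k, cutoffPow k x • H (k + 1)

lemma contDiff_cutoffTerm (H : ℕ → ℂ) (k : ℕ) :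
    ContDiff ℝ ∞ fun y => cutoffPow k y • H (k + 1) :=
  (contDiff_cutoffPow k).smul contDiff_const

lemma Icc_zero_one_subset_Ioo (k : ℕ) :
    Icc (0 : ℝ) 1 ⊆ Ioo (-(2 * ((k : ℝ) + 1))⁻¹) (3 / 2) :=
  Icc_subset_Ioo (by simp only [Left.neg_neg_iff]; positivity) (by norm_num)

lemma cutoffTerm_eqOn (H : ℕ → ℂ) (k : ℕ) :
    EqOn (fun y => cutoffPow k y • H (k + 1)) (fun y => H (k + 1) * ((1 - y : ℝ) : ℂ) ^ (k + 1))
      (Ioo (-(2 * ((k : ℝ) + 1))⁻¹) (3 / 2)) := fun y hy => by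
  simp only [cutoffPow_eqOn k hy, Complex.real_smul]
  push_cast
  ring

lemma cutoffSeries_one (H : ℕ → ℂ) : cutoffSeries H 1 = 0 := by
  simp [cutoffSeries, cutoffPow]

lemma norm_iteratedDeriv_cutoffTerm_le (H : ℕ → ℂ) {k n : ℕ} {x : ℝ} (hx : x ∈ Icc (0 : ℝ) 1) :
    ‖iteratedDeriv n (fun y => cutoffPow k y • H (k + 1)) x‖ ≤ ((k : ℝ) + 1) ^ n * ‖H (k + 1)‖ := by
  rw [norm_iteratedDeriv_smul_const (contDiff_cutoffPow k),
    (cutoffPow_eqOn k).iteratedDeriv_of_isOpen isOpen_Ioo n (Icc_zero_one_subset_Ioo k hx)]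
  gcongr
  simpa using norm_iteratedDeriv_one_sub_pow_le (m := k + 1) (n := n) le_rfl
    (abs_le.2 ⟨by linarith [hx.2], by linarith [hx.1]⟩)

section CutoffSeries

variable {H : ℕ → ℂ} {a C : ℝ}

lemma exists_summable_bound_iteratedDeriv_cutoffTerm (ha : 0 < a)
    (hH : ∀ k : ℕ, ‖H (k + 1)‖ ≤ C * exp (-(2 * a * √((k : ℝ) + 1)))) (n : ℕ) :
    ∃ u : ℕ → ℝ, Summable u ∧
      ∀ k x, ‖iteratedDeriv n (fun y => cutoffPow k y • H (k + 1)) x‖ ≤ u k := by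
  obtain ⟨B, hB⟩ := hasScaledDerivBounds_cutoffPow n
  refine ⟨fun k => B * C * (((k : ℝ) + 1) ^ n * exp (-(2 * a * √((k : ℝ) + 1)))),
    (summable_succ_pow_mul_exp_neg_sqrt (by positivity) n).mul_left _, fun k x => ?_⟩
  rw [norm_iteratedDeriv_smul_const (contDiff_cutoffPow k)]
  calc _ ≤ B * ((k : ℝ) + 1) ^ n * (C * exp (-(2 * a * √((k : ℝ) + 1)))) :=
        mul_le_mul (hB k x trivial) (hH k) (norm_nonneg _) ((norm_nonneg _).trans (hB k x trivial))
    _ = _ := by ring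

lemma contDiff_cutoffSeries (ha : 0 < a)
    (hH : ∀ k : ℕ, ‖H (k + 1)‖ ≤ C * exp (-(2 * a * √((k : ℝ) + 1)))) :
    ContDiff ℝ ∞ (cutoffSeries H) :=
  contDiff_tsum_of_summable_bound (contDiff_cutoffTerm H)
    (exists_summable_bound_iteratedDeriv_cutoffTerm ha hH)

lemma hasSum_cutoffSeries (ha : 0 < a)
    (hH : ∀ k : ℕ, ‖H (k + 1)‖ ≤ C * exp (-(2 * a * √((k : ℝ) + 1)))) {x : ℝ}
    (hx : x ∈ Icc (0 : ℝ) 1) :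
    HasSum (fun k : ℕ => H (k + 1) * ((1 - x : ℝ) : ℂ) ^ (k + 1)) (cutoffSeries H x) := by
  obtain ⟨u, hu, hle⟩ := exists_summable_bound_iteratedDeriv_cutoffTerm ha hH 0
  have hsum : Summable fun k => cutoffPow k x • H (k + 1) :=
    .of_norm_bounded hu fun k => by simpa using hle k x
  convert hsum.hasSum using 1
  · funext k
    exact (cutoffTerm_eqOn H k (Icc_zero_one_subset_Ioo k hx)).symm
  · rfl

lemma tendstoUniformlyOn_iteratedDeriv_cutoffSeries (ha : 0 < a)
    (hH : ∀ k : ℕ, ‖H (k + 1)‖ ≤ C * exp (-(2 * a * √((k : ℝ) + 1)))) (n : ℕ) :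
    TendstoUniformlyOn
      (fun m x => ∑ k ∈ Finset.range m,
        iteratedDeriv n (fun y : ℝ => H (k + 1) * ((1 - y : ℝ) : ℂ) ^ (k + 1)) x)
      (iteratedDeriv n (cutoffSeries H)) atTop (Icc 0 1) := by
  refine (tendstoUniformlyOn_iteratedDeriv_tsum_of_summable_bound (contDiff_cutoffTerm H)
    (exists_summable_bound_iteratedDeriv_cutoffTerm ha hH) n _).congr ?_
  filter_upwards with m x hx
  exact Finset.sum_congr rfl fun k _ =>
    (cutoffTerm_eqOn H k).iteratedDeriv_of_isOpen isOpen_Ioo n (Icc_zero_one_subset_Ioo k hx)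

theorem isGevrey2_cutoffSeries {b : ℝ} (hb : 0 < b) (hba : b < a)
    (hH : ∀ k : ℕ, ‖H (k + 1)‖ ≤ C * exp (-(2 * a * √((k : ℝ) + 1)))) :
    IsGevrey2 (b ^ 2) (cutoffSeries H) := by
  have hC : 0 ≤ C := (mul_nonneg_iff_of_pos_right (exp_pos _)).mp ((norm_nonneg _).trans (hH 0))
  set E : ℕ → ℝ := fun k => exp (-(2 * (a - b) * √((k : ℝ) + 1)))
  have hE : Summable E := by
    simpa using summable_succ_pow_mul_exp_neg_sqrt (c := 2 * (a - b)) (by linarith) 0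
  refine ⟨C * ∑' k, E k + 1, by positivity, fun n x hx => ?_⟩
  have hterm : ∀ k, ‖iteratedDeriv n (fun y => cutoffPow k y • H (k + 1)) x‖ ≤
      C * ((n ! : ℝ) ^ 2 / b ^ (2 * n)) * E k := fun k =>
    calc _ ≤ ((k : ℝ) + 1) ^ n * ‖H (k + 1)‖ := norm_iteratedDeriv_cutoffTerm_le H hx
      _ ≤ C * (((k : ℝ) + 1) ^ n * exp (-(2 * a * √((k : ℝ) + 1)))) := by
          rw [mul_left_comm]
          gcongr
          exact hH k
      _ ≤ C * ((n ! : ℝ) ^ 2 / b ^ (2 * n) * E k) :=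
          mul_le_mul_of_nonneg_left
            (pow_mul_exp_neg_two_mul_sqrt_le_mul_exp hb (by positivity) n) hC
      _ = _ := by ring
  unfold cutoffSeries
  rw [iteratedDeriv_tsum_of_summable_bound (contDiff_cutoffTerm H)
    (exists_summable_bound_iteratedDeriv_cutoffTerm (hb.trans hba) hH)]
  calc ‖∑' k, iteratedDeriv n (fun y => cutoffPow k y • H (k + 1)) x‖
      ≤ ∑' k, C * ((n ! : ℝ) ^ 2 / b ^ (2 * n)) * E k :=
        tsum_of_norm_bounded (hE.mul_left _).hasSum hterm
    _ = C * (∑' k, E k) * (n ! : ℝ) ^ 2 / (b ^ 2) ^ n := by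
        rw [tsum_mul_left, ← pow_mul]
        ring
    _ ≤ (C * ∑' k, E k + 1) * (n ! : ℝ) ^ 2 / (b ^ 2) ^ n := by
        gcongr
        linarith

end CutoffSeries

theorem statement18_general (σ : ℝ) (hσ : 0 < σ) (s : ℂ)
    (hσs : σ < (s ^ ((1:ℂ)/2)).re ^ 2) (H : ℕ → ℂ)
    (hH : ∃ C : ℝ, ∀ k : ℕ, 1 ≤ k →
      ‖H k‖ * Real.exp (2 * (s ^ ((1:ℂ)/2)).re * Real.sqrt k) ≤ C) :
    ∃ U : ℝ → ℂ, ContDiff ℝ (⊤ : ℕ∞) U ∧ U 1 = 0 ∧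
      (∀ x ∈ Set.Icc (0:ℝ) 1,
        HasSum (fun k : ℕ => H (k + 1) * ((1 - x : ℝ) : ℂ) ^ (k + 1)) (U x)) ∧
      (∀ n : ℕ, TendstoUniformlyOn
        (fun (m : ℕ) (x : ℝ) => ∑ k ∈ Finset.range m,
          iteratedDeriv n (fun y : ℝ => H (k + 1) * ((1 - y : ℝ) : ℂ) ^ (k + 1)) x)
        (iteratedDeriv n U) Filter.atTop (Set.Icc (0:ℝ) 1)) ∧
      Xnorm σ U ≠ ⊤ := by
  have ha₀ : 0 ≤ (s ^ ((1 : ℂ) / 2)).re := by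
    rw [one_div, Complex.cpow_inv_two_re]
    positivity
  set a := (s ^ ((1 : ℂ) / 2)).re
  obtain ⟨C, hC⟩ := hH
  have hsqrt : √σ < a := (Real.sqrt_lt_sqrt hσ.le hσs).trans_eq (Real.sqrt_sq ha₀)
  obtain ⟨b, hσb, hba⟩ := exists_between hsqrt
  have hb : 0 < b := (Real.sqrt_pos.2 hσ).trans hσb
  have ha : 0 < a := hb.trans hba
  have hdecay : ∀ k : ℕ, ‖H (k + 1)‖ ≤ C * exp (-(2 * a * √((k : ℝ) + 1))) := fun k => by
    have h := hC (k + 1) k.succ_pos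
    push_cast at h
    rwa [exp_neg, ← div_eq_mul_inv, le_div_iff₀ (exp_pos _)]
  exact ⟨cutoffSeries H, contDiff_cutoffSeries ha hdecay, cutoffSeries_one H,
    fun x hx => hasSum_cutoffSeries ha hdecay hx,
    tendstoUniformlyOn_iteratedDeriv_cutoffSeries ha hdecay,
    (isGevrey2_cutoffSeries hb hba hdecay).xnorm_ne_top hσ ((Real.sqrt_lt' hb).1 hσb)⟩

/-- (Theorem `LeaverThm`, analytic core.) If `Re s < 0`,
`σ < (Re √s)²` and `sup_k |H_k| e^{2 Re(√s) √k} < ∞`, then the power series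
`Σ_{k≥1} H_k (1−x)^k` and all its term-by-term derivatives converge uniformly on `[0,1]`,
and the resulting function (extended smoothly to `ℝ`) vanishes at `1` and lies in `X^σ`. -/
theorem statement18 (σ : ℝ) (hσ : 0 < σ) (s : ℂ) (hs : s.re < 0)
    (hσs : σ < (s ^ ((1:ℂ)/2)).re ^ 2) (H : ℕ → ℂ)
    (hH : ∃ C : ℝ, ∀ k : ℕ, 1 ≤ k →
      ‖H k‖ * Real.exp (2 * (s ^ ((1:ℂ)/2)).re * Real.sqrt k) ≤ C) :
    ∃ U : ℝ → ℂ, ContDiff ℝ (⊤ : ℕ∞) U ∧ U 1 = 0 ∧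
      (∀ x ∈ Set.Icc (0:ℝ) 1,
        HasSum (fun k : ℕ => H (k + 1) * ((1 - x : ℝ) : ℂ) ^ (k + 1)) (U x)) ∧
      (∀ n : ℕ, TendstoUniformlyOn
        (fun (m : ℕ) (x : ℝ) => ∑ k ∈ Finset.range m,
          iteratedDeriv n (fun y : ℝ => H (k + 1) * ((1 - y : ℝ) : ℂ) ^ (k + 1)) x)
        (iteratedDeriv n U) Filter.atTop (Set.Icc (0:ℝ) 1)) ∧
      Xnorm σ U ≠ ⊤ :=
  statement18_general σ hσ s hσs H hH
end
end

section
/- Let s∈ℂ with Re s < 0, and let w:[0,∞)→ℂ be the function w(x) := e^{s/x} for x>0 and w(0) := 0 (which extends to a function that is smooth on [0,∞) with all derivatives vanishing at 0). Then for every σ > −Re s, sup_{k∈ℕ} sup_{x∈[0,∞)} (σ^k/(k!)^2) |w^{(k)}(x)| = ∞, where w^{(k)} denotes the k-th derivative of w. -/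
noncomputable section

open Filter Set MeasureTheory
open scoped ENNReal Topology

/-!
For `x > 0` the `n`-th derivative of `e^{s/x}` is `P_n(1/x) e^{s/x}` for a polynomial `P_n`, and
it tends to `0` as `x → 0⁺` because `Re s < 0`; so `w` is smooth on `[0, ∞)` and flat at `0`.
If `σ^k/(k!)² |w^{(k)}|` were bounded by `M`, Taylor's formula at `0` evaluated at `x = σ/K` would
give `e^{K Re s/σ} = |w(σ/K)| ≤ M K·K!/K^K ≤ M e K² e^{-K}` (Stirling), which fails for large `K`
since `σ + Re s > 0`.
-/

theorem factorial_le_exp_one_mul_sqrt_mul_pow {n : ℕ} (hn : n ≠ 0) :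
    (n.factorial : ℝ) ≤ Real.exp 1 * √n * (n / Real.exp 1) ^ n := by
  obtain ⟨m, rfl⟩ := Nat.exists_eq_add_one_of_ne_zero hn
  have h : Stirling.stirlingSeq (m + 1) ≤ Stirling.stirlingSeq 1 :=
    Stirling.stirlingSeq'_antitone (Nat.zero_le m)
  rw [Stirling.stirlingSeq_one, Stirling.stirlingSeq, div_le_iff₀ (by positivity),
    Real.sqrt_mul (by norm_num)] at h
  refine h.trans_eq ?_
  field_simp

section DerivativeChain

open Nat

variable {E : Type*} [NormedAddCommGroup E] [NormedSpace ℝ E] {g : ℕ → ℝ → E} {s : Set ℝ}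

theorem contDiffOn_of_hasDerivWithinAt_succ (hs : UniqueDiffOn ℝ s)
    (hg : ∀ n, ∀ x ∈ s, HasDerivWithinAt (g n) (g (n + 1) x) s x) (n : ℕ) :
    ContDiffOn ℝ (⊤ : ℕ∞) (g n) s := by
  refine contDiffOn_infty.2 fun m => ?_
  induction m generalizing n with
  | zero => exact contDiffOn_zero.2 fun x hx => (hg n x hx).continuousWithinAt
  | succ m ih =>
    rw [Nat.cast_succ, contDiffOn_succ_iff_derivWithin hs]
    refine ⟨fun x hx => (hg n x hx).differentiableWithinAt, by simp, ?_⟩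
    exact (ih (n + 1)).congr fun x hx => (hg n x hx).derivWithin (hs x hx)

theorem iteratedDerivWithin_eqOn_of_hasDerivWithinAt_succ (hs : UniqueDiffOn ℝ s)
    (hg : ∀ n, ∀ x ∈ s, HasDerivWithinAt (g n) (g (n + 1) x) s x) (n : ℕ) :
    EqOn (iteratedDerivWithin n (g 0) s) (g n) s := by
  induction n with
  | zero => exact fun x _ => by rw [iteratedDerivWithin_zero]
  | succ n ih =>
    intro x hx
    rw [iteratedDerivWithin_succ, derivWithin_congr ih (ih hx)]
    exact (hg n x hx).derivWithin (hs x hx)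

theorem norm_le_of_hasDerivWithinAt_succ_of_eq_zero {a b C x : ℝ} {n : ℕ} (hab : a < b)
    (hg : ∀ k, ∀ y ∈ Icc a b, HasDerivWithinAt (g k) (g (k + 1) y) (Icc a b) y)
    (hga : ∀ k ≤ n, g k a = 0) (hC : ∀ y ∈ Icc a b, ‖g (n + 1) y‖ ≤ C) (hx : x ∈ Icc a b) :
    ‖g 0 x‖ ≤ C * (x - a) ^ (n + 1) / n ! := by
  have hs := uniqueDiffOn_Icc hab
  have hderiv := iteratedDerivWithin_eqOn_of_hasDerivWithinAt_succ hs hg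
  have hcd : ContDiffOn ℝ (n + 1) (g 0) (Icc a b) :=
    (contDiffOn_of_hasDerivWithinAt_succ hs hg 0).of_le (by exact_mod_cast le_top)
  have htaylor := taylor_mean_remainder_bound hab.le hcd hx fun y hy => by
    rw [hderiv (n + 1) hy]; exact hC y hy
  have hpoly : taylorWithinEval (g 0) n (Icc a b) a x = 0 := by
    rw [taylor_within_apply]
    refine Finset.sum_eq_zero fun k hk => ?_
    rw [hderiv k (left_mem_Icc.2 hab.le), hga k (Finset.mem_range_succ_iff.1 hk), smul_zero]
  rwa [hpoly, sub_zero] at htaylor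

theorem norm_le_of_flat_of_gevrey_two {σ M : ℝ} (hσ : 0 < σ)
    (hg : ∀ n, ∀ x ∈ Ici (0:ℝ), HasDerivWithinAt (g n) (g (n + 1) x) (Ici 0) x)
    (hg0 : ∀ n, g n 0 = 0) (hM : ∀ k, ∀ x ∈ Ici (0:ℝ), σ ^ k / (k ! : ℝ) ^ 2 * ‖g k x‖ ≤ M)
    {K : ℕ} (hK : K ≠ 0) :
    ‖g 0 (σ / K)‖ ≤ M * Real.exp 1 * K ^ 2 * Real.exp (-K) := by
  obtain ⟨n, rfl⟩ := Nat.exists_eq_add_one_of_ne_zero hK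
  have hb : 0 < σ / (n + 1 : ℕ) := by positivity
  have hC (y : ℝ) (hy : y ∈ Icc 0 (σ / (n + 1 : ℕ))) :
      ‖g (n + 1) y‖ ≤ M * ((n + 1)! : ℝ) ^ 2 / σ ^ (n + 1) := by
    have := hM (n + 1) y hy.1
    rw [div_mul_eq_mul_div, div_le_iff₀ (by positivity)] at this
    rwa [le_div_iff₀ (by positivity), mul_comm]
  have htaylor := norm_le_of_hasDerivWithinAt_succ_of_eq_zero hb
    (fun k y hy => (hg k y hy.1).mono Icc_subset_Ici_self) (fun k _ => hg0 k) hC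
    (right_mem_Icc.2 hb.le)
  have hM0 : 0 ≤ M := by simpa [hg0] using hM 0 0 self_mem_Ici
  set K : ℕ := n + 1 with hKdef
  have hK1 : (1 : ℝ) ≤ K := by exact_mod_cast Nat.le_add_left 1 n
  calc ‖g 0 (σ / K)‖ ≤ M * (K ! : ℝ) ^ 2 / σ ^ K * (σ / K - 0) ^ K / n ! := htaylor
    _ = M * K * K ! / K ^ K := by
      rw [sub_zero, hKdef, Nat.factorial_succ, div_pow]; push_cast; field_simp
    _ ≤ M * K * (Real.exp 1 * √K * (K / Real.exp 1) ^ K) / K ^ K := by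
      gcongr; exact factorial_le_exp_one_mul_sqrt_mul_pow hK
    _ = M * Real.exp 1 * (K * √K) * Real.exp (-K) := by
      rw [Real.exp_neg, ← Real.exp_one_pow, div_pow]; field_simp
    _ ≤ M * Real.exp 1 * K ^ 2 * Real.exp (-K) := by
      gcongr
      rw [sq]
      gcongr
      exact Real.sqrt_le_self_iff.2 (Or.inr hK1)

end DerivativeChain

open Polynomial in
/-- `d/dx (P(1/x) e^{s/x}) = -x⁻² (P'(1/x) + s P(1/x)) e^{s/x}`, so the `n`-th derivative of
`e^{s/x}` is `P_n(1/x) e^{s/x}`. -/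
def expInvPoly (s : ℂ) : ℕ → ℂ[X]
  | 0 => 1
  | n + 1 => -X ^ 2 * (derivative (expInvPoly s n) + C s * expInvPoly s n)

def expDivDeriv (s : ℂ) (n : ℕ) (x : ℝ) : ℂ :=
  if x ≤ 0 then 0 else (expInvPoly s n).eval (x : ℂ)⁻¹ * Complex.exp (s / x)

@[simp]
theorem expDivDeriv_of_nonpos (s : ℂ) (n : ℕ) {x : ℝ} (hx : x ≤ 0) : expDivDeriv s n x = 0 :=
  if_pos hx

theorem expDivDeriv_zero_of_pos (s : ℂ) {x : ℝ} (hx : 0 < x) :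
    expDivDeriv s 0 x = Complex.exp (s / x) := by
  simp [expDivDeriv, hx.not_ge, expInvPoly]

theorem tendsto_eval_mul_cexp_mul_atTop {s : ℂ} (hs : s.re < 0) (Q : Polynomial ℂ) :
    Tendsto (fun t : ℝ => Q.eval (t : ℂ) * Complex.exp (s * t)) atTop (𝓝 0) := by
  have hmonomial (i : ℕ) :
      Tendsto (fun t : ℝ => (t : ℂ) ^ i * Complex.exp (s * t)) atTop (𝓝 0) := by
    rw [tendsto_zero_iff_norm_tendsto_zero]
    refine (tendsto_rpow_mul_exp_neg_mul_atTop_nhds_zero i (-s.re) (by linarith)).congr'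
      ?_
    filter_upwards [eventually_ge_atTop 0] with t ht
    simp [Complex.norm_exp, abs_of_nonneg ht, Real.rpow_natCast]
  have hsum := tendsto_finsetSum (Finset.range (Q.natDegree + 1))
    fun i _ => (hmonomial i).const_mul (Q.coeff i)
  simp only [mul_zero, Finset.sum_const_zero] at hsum
  refine hsum.congr fun t => ?_
  rw [Polynomial.eval_eq_sum_range, Finset.sum_mul]
  exact Finset.sum_congr rfl fun i _ => (mul_assoc _ _ _).symm

theorem tendsto_eval_inv_mul_cexp_div_nhdsGT_zero {s : ℂ} (hs : s.re < 0) (Q : Polynomial ℂ) :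
    Tendsto (fun x : ℝ => Q.eval (x : ℂ)⁻¹ * Complex.exp (s / x)) (𝓝[>] 0) (𝓝 0) := by
  refine ((tendsto_eval_mul_cexp_mul_atTop hs Q).comp tendsto_inv_nhdsGT_zero).congr fun x => ?_
  simp [div_eq_mul_inv]

theorem hasDerivAt_expDivDeriv (s : ℂ) (n : ℕ) {x : ℝ} (hx : 0 < x) :
    HasDerivAt (expDivDeriv s n) (expDivDeriv s (n + 1) x) x := by
  have hx0 : (x : ℂ) ≠ 0 := by exact_mod_cast hx.ne'
  have hinv : HasDerivAt (fun y : ℝ => (y : ℂ)⁻¹) (-((x : ℂ) ^ 2)⁻¹) x :=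
    (hasDerivAt_inv hx0).comp_ofReal
  have hG : HasDerivAt (fun z : ℂ => (expInvPoly s n).eval z * Complex.exp (s * z))
      ((expInvPoly s n).derivative.eval (x : ℂ)⁻¹ * Complex.exp (s * (x : ℂ)⁻¹)
        + (expInvPoly s n).eval (x : ℂ)⁻¹ * (Complex.exp (s * (x : ℂ)⁻¹) * s)) (x : ℂ)⁻¹ :=
    (Polynomial.hasDerivAt _ _).mul (by simpa using ((hasDerivAt_id _).const_mul s).cexp)
  have heq : expDivDeriv s n =ᶠ[𝓝 x]
      (fun z : ℂ => (expInvPoly s n).eval z * Complex.exp (s * z)) ∘ fun y : ℝ => (y : ℂ)⁻¹ := by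
    filter_upwards [Ioi_mem_nhds hx] with y hy
    simp [expDivDeriv, (mem_Ioi.1 hy).not_ge, div_eq_mul_inv]
  refine ((hG.scomp x hinv).congr_of_eventuallyEq heq).congr_deriv ?_
  simp only [expDivDeriv, hx.not_ge, if_false, expInvPoly, Polynomial.eval_mul,
    Polynomial.eval_add, Polynomial.eval_neg, Polynomial.eval_pow, Polynomial.eval_X,
    Polynomial.eval_C, smul_eq_mul, div_eq_mul_inv]
  ring

theorem hasDerivWithinAt_expDivDeriv {s : ℂ} (hs : s.re < 0) (n : ℕ) {x : ℝ} (hx : x ∈ Ici 0) :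
    HasDerivWithinAt (expDivDeriv s n) (expDivDeriv s (n + 1) x) (Ici 0) x := by
  rcases (mem_Ici.1 hx).lt_or_eq with hx | rfl
  · exact (hasDerivAt_expDivDeriv s n hx).hasDerivWithinAt
  -- the difference quotient at `0` is `(X * P_n)(1/y) e^{s/y}`
  rw [expDivDeriv_of_nonpos s _ le_rfl, hasDerivWithinAt_iff_tendsto_slope, Ici_sdiff_left]
  refine (tendsto_eval_inv_mul_cexp_div_nhdsGT_zero hs (.X * expInvPoly s n)).congr' ?_
  filter_upwards [self_mem_nhdsWithin] with y (hy : 0 < y)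
  simp [slope_def_module, expDivDeriv, hy.not_ge, div_eq_mul_inv, mul_assoc]

theorem iteratedDeriv_eq_expDivDeriv {s : ℂ} {w : ℝ → ℂ} (hw : EqOn w (expDivDeriv s 0) (Ioi 0))
    (n : ℕ) {x : ℝ} (hx : 0 < x) : iteratedDeriv n w x = expDivDeriv s n x := by
  rw [← iteratedDerivWithin_of_isOpen isOpen_Ioi hx, iteratedDerivWithin_congr hw hx]
  exact iteratedDerivWithin_eqOn_of_hasDerivWithinAt_succ isOpen_Ioi.uniqueDiffOn
    (fun n x hx => (hasDerivAt_expDivDeriv s n hx).hasDerivWithinAt) n hx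

/-- (Lemma `expLem`.) Let `Re s < 0` and `w(x) = e^{s/x}` for `x > 0`,
`w(0) = 0`. Then `w` is smooth on `[0,∞)`, and for every `σ > −Re s`,
`sup_k sup_{x ≥ 0} (σ^k/(k!)²)|w^{(k)}(x)| = ∞`. -/
theorem statement19 (s : ℂ) (hs : s.re < 0) (w : ℝ → ℂ)
    (hw : ∀ x : ℝ, w x = if x = 0 then 0 else Complex.exp (s / (x : ℂ))) :
    ContDiffOn ℝ (⊤ : ℕ∞) w (Set.Ici 0) ∧
    ∀ σ : ℝ, -s.re < σ →
      (⨆ (k : ℕ) (x : ℝ) (_ : 0 ≤ x),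
          ENNReal.ofReal (σ ^ k / ((k.factorial : ℝ)) ^ 2 * ‖iteratedDeriv k w x‖)) = ⊤ := by
  have hchain (n : ℕ) (x : ℝ) (hx : x ∈ Ici 0) := hasDerivWithinAt_expDivDeriv hs n hx
  have hw0 : EqOn w (expDivDeriv s 0) (Ici 0) := fun x (hx : 0 ≤ x) => by
    rcases hx.lt_or_eq with hx | rfl
    · rw [hw, if_neg hx.ne', expDivDeriv_zero_of_pos s hx]
    · simp [hw]
  refine ⟨(contDiffOn_of_hasDerivWithinAt_succ (uniqueDiffOn_Ici 0) hchain 0).congr hw0,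
    fun σ hσ => ?_⟩
  have hσ0 : 0 < σ := by linarith
  by_contra hfin
  set M := (⨆ (k : ℕ) (x : ℝ) (_ : 0 ≤ x),
    ENNReal.ofReal (σ ^ k / ((k.factorial : ℝ)) ^ 2 * ‖iteratedDeriv k w x‖)).toReal
  have hM (k : ℕ) (x : ℝ) (hx : x ∈ Ici 0) :
      σ ^ k / (k.factorial : ℝ) ^ 2 * ‖expDivDeriv s k x‖ ≤ M := by
    rcases (mem_Ici.1 hx).lt_or_eq with hx' | rfl
    · rw [← iteratedDeriv_eq_expDivDeriv (hw0.mono Ioi_subset_Ici_self) k hx']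
      exact (ENNReal.ofReal_le_iff_le_toReal hfin).1 (le_iSup₂_of_le k x (le_iSup_of_le hx le_rfl))
    · rw [expDivDeriv_of_nonpos s k le_rfl, norm_zero, mul_zero]
      exact ENNReal.toReal_nonneg
  set a := 1 + s.re / σ with ha_def
  have ha : 0 < a := by
    have : -1 < s.re / σ := by rw [lt_div_iff₀ hσ0]; linarith
    linarith
  have hbound (K : ℕ) (hK : K ≠ 0) :
      1 ≤ M * Real.exp 1 * ((K : ℝ) ^ (2 : ℝ) * Real.exp (-a * K)) := by
    have := norm_le_of_flat_of_gevrey_two hσ0 hchain (fun n => expDivDeriv_of_nonpos s n le_rfl)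
      hM hK
    have hK0 : (0 : ℝ) < K := by positivity
    rw [hw0.symm (by positivity : (0 : ℝ) ≤ σ / K), hw, if_neg (by positivity), Complex.norm_exp,
      Complex.div_ofReal_re] at this
    have hsplit : Real.exp (-a * K) = Real.exp (-K) * (Real.exp (s.re / (σ / K)))⁻¹ := by
      rw [← Real.exp_neg, ← Real.exp_add]; congr 1; rw [ha_def]; field_simp; ring
    rw [Real.rpow_two, hsplit, ← mul_assoc, ← mul_assoc, le_mul_inv_iff₀ (Real.exp_pos _),
      one_mul]
    linarith
  have hlim := ((tendsto_rpow_mul_exp_neg_mul_atTop_nhds_zero 2 a ha).comp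
    tendsto_natCast_atTop_atTop).const_mul (M * Real.exp 1)
  rw [mul_zero] at hlim
  obtain ⟨K, hKlt, hK⟩ := ((hlim.eventually_lt_const one_pos).and (eventually_ne_atTop 0)).exists
  exact (hbound K hK).not_gt hKlt
end
end
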